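/- arXiv:1901.02474 — 9 statements merged into one kernel-verified Lean document; each statement's English description precedes it below -/
import Mathlib

section
/- Let f : ℝ → ℝ be a concave function such that f(0) = 0, f is differentiable at 0 with f'(0) ≠ 0, and there exists x* > 0 with f(x*) > 0. Let a, b be real numbers with a > b > 0. Then there exists δ > 0 such that for every ∇ ∈ (0, δ), a·f(∇) + b·f(−∇) > 0. -/
/-!
Concavity puts every chord slope from `0` below `f'(0)`, so the chord to `x*` forces
`f'(0) ≥ f(x*)/x* > 0`. Then `t ↦ a f(t) + b f(-t)` vanishes at `0` with derivative
`(a - b) f'(0) > 0` there, hence is positive just to the right of `0`.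
-/

open Filter Set Topology

theorem concaveOn_univ_of_forall_le {𝕜 : Type*} [Field 𝕜] [LinearOrder 𝕜]
    [IsStrictOrderedRing 𝕜] {f : 𝕜 → 𝕜}
    (hf : ∀ x y α : 𝕜, 0 ≤ α → α ≤ 1 → α * f x + (1 - α) * f y ≤ f (α * x + (1 - α) * y)) :
    ConcaveOn 𝕜 univ f := by
  refine ⟨convex_univ, fun x _ y _ α β hα hβ hαβ => ?_⟩
  obtain rfl : β = 1 - α := by linarith
  exact hf x y α hα (by linarith)

theorem ConcaveOn.deriv_pos_of_lt {S : Set ℝ} {f : ℝ → ℝ} (hfc : ConcaveOn ℝ S f)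
    {x y : ℝ} (hx : x ∈ S) (hy : y ∈ S) (hxy : x < y) (hfxy : f x < f y)
    (hfd : DifferentiableAt ℝ f x) : 0 < deriv f x :=
  ((slope_pos_iff hxy).mpr hfxy).trans_le (hfc.slope_le_deriv hx hy hxy hfd)

theorem HasDerivAt.mul_add_mul_comp_neg {f : ℝ → ℝ} {f' : ℝ} (hf : HasDerivAt f f' 0)
    (a b : ℝ) : HasDerivAt (fun t => a * f t + b * f (-t)) ((a - b) * f') 0 := by
  have hneg : HasDerivAt (fun t => f (-t)) (-f') 0 := by
    have hf_neg : HasDerivAt f f' (-0) := by rwa [neg_zero]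
    simpa [Function.comp_def] using hf_neg.comp 0 (hasDerivAt_neg 0)
  rw [show (a - b) * f' = a * f' + b * -f' by ring]
  exact (hf.const_mul a).add (hneg.const_mul b)

theorem HasDerivAt.eventually_nhdsGT_lt {g : ℝ → ℝ} {g' x : ℝ} (hg : HasDerivAt g g' x)
    (hg' : 0 < g') : ∀ᶠ t in 𝓝[>] x, g x < g t := by
  have hslope : ∀ᶠ t in 𝓝[>] x, 0 < slope g x t :=
    (hasDerivAt_iff_tendsto_slope.mp hg).eventually (eventually_gt_nhds hg')
      |>.filter_mono (nhdsGT_le_nhdsNE x)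
  filter_upwards [hslope, self_mem_nhdsWithin] with t ht hxt
  exact (slope_pos_iff hxt).mp ht

theorem exists_delta_pos_combination_general
    (f : ℝ → ℝ)
    (hf : ∀ x y α : ℝ, 0 ≤ α → α ≤ 1 →
      α * f x + (1 - α) * f y ≤ f (α * x + (1 - α) * y))
    (hf0 : f 0 = 0)
    (hdiff : DifferentiableAt ℝ f 0)
    (hpos : ∃ xs : ℝ, 0 < xs ∧ 0 < f xs)
    (a b : ℝ) (hab : b < a) :
    ∃ δ > 0, ∀ grad : ℝ, grad ∈ Set.Ioo (0 : ℝ) δ → 0 < a * f grad + b * f (-grad) := by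
  obtain ⟨xs, hxs, hfxs⟩ := hpos
  have hderiv : 0 < deriv f 0 :=
    (concaveOn_univ_of_forall_le hf).deriv_pos_of_lt (mem_univ 0) (mem_univ xs) hxs
      (by rwa [hf0]) hdiff
  have hevent := (hdiff.hasDerivAt.mul_add_mul_comp_neg a b).eventually_nhdsGT_lt
    (mul_pos (sub_pos.mpr hab) hderiv)
  simpa [hf0] using (nhdsGT_basis (0 : ℝ)).eventually_iff.mp hevent

/-- Lemma A.4: for a concave `f` with `f 0 = 0`, differentiable at `0` with nonzero derivative,
and positive somewhere on the positive axis, and for `a > b > 0`, there is `δ > 0` such that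
`a * f ∇ + b * f (-∇) > 0` for all `∇ ∈ (0, δ)`. -/
theorem exists_delta_pos_combination
    (f : ℝ → ℝ)
    (hf : ∀ x y α : ℝ, 0 ≤ α → α ≤ 1 →
      α * f x + (1 - α) * f y ≤ f (α * x + (1 - α) * y))
    (hf0 : f 0 = 0)
    (hdiff : DifferentiableAt ℝ f 0)
    (hderiv : deriv f 0 ≠ 0)
    (hpos : ∃ xs : ℝ, 0 < xs ∧ 0 < f xs)
    (a b : ℝ) (hab : b < a) (hb : 0 < b) :
    ∃ δ > 0, ∀ grad : ℝ, grad ∈ Set.Ioo (0 : ℝ) δ → 0 < a * f grad + b * f (-grad) :=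
  exists_delta_pos_combination_general f hf hf0 hdiff hpos a b hab
end

section
/- Let f : ℝ → ℝ be a concave function such that f(0) = 0, f is differentiable at 0 with f'(0) ≠ 0, f is bounded above with sup f > 0, and there exists x* > 0 with f(x*) > 0. Let P and Q be probability measures on a measurable space X. Define D^Ralf(P, Q) = ⨆_C ∫ f(C(x) − ∫ C(y) dQ(y)) dP(x), where the supremum is taken over all bounded measurable functions C : X → ℝ. Then D^Ralf(P, Q) ≥ 0, and D^Ralf(P, Q) = 0 if and only if P = Q. -/
/-!
Evaluating the objective at the constant critic `0` gives `0 ≤ D^Ralf`.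
If `P = Q`, Jensen's inequality for the concave `f` bounds every term by `f 0 = 0`.
Conversely, if `D^Ralf = 0`, then for each measurable `A` the scalar function
`t ↦ ∫ f (t 1_A - t Q(A)) dP` is at most `0`, its value at `t = 0`; so its derivative
`f'(0) (P(A) - Q(A))` at `0` vanishes, and `f'(0) ≠ 0` forces `P(A) = Q(A)`.
-/

open MeasureTheory Set

lemma concaveOn_univ_of_forall {f : ℝ → ℝ}
    (hf : ∀ x y α : ℝ, 0 ≤ α → α ≤ 1 → α * f x + (1 - α) * f y ≤ f (α * x + (1 - α) * y)) :
    ConcaveOn ℝ univ f := by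
  refine ⟨convex_univ, fun x _ y _ a b ha _ hab => ?_⟩
  obtain rfl : b = 1 - a := by linarith
  simpa only [smul_eq_mul] using hf x y a ha (by linarith)

lemma ConcaveOn.continuous_of_univ {f : ℝ → ℝ} (hf : ConcaveOn ℝ univ f) : Continuous f :=
  continuousOn_univ.mp (hf.continuousOn isOpen_univ)

section Integrability

variable {X : Type*} [MeasurableSpace X] {μ : Measure X} [IsFiniteMeasure μ] {C : X → ℝ}

lemma integrable_of_abs_le (hC : Measurable C) {M : ℝ} (hM : ∀ x, |C x| ≤ M) :
    Integrable C μ :=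
  .of_bound hC.aestronglyMeasurable M (.of_forall hM)

lemma Continuous.integrable_comp_of_abs_le {g : ℝ → ℝ} (hg : Continuous g) (hC : Measurable C)
    {M : ℝ} (hM : ∀ x, |C x| ≤ M) : Integrable (fun x => g (C x)) μ := by
  obtain ⟨K, hK⟩ := (isCompact_Icc (a := -M) (b := M)).exists_bound_of_continuousOn hg.continuousOn
  exact .of_bound (hg.measurable.comp hC).aestronglyMeasurable K
    (.of_forall fun x => hK _ (abs_le.mp (hM x)))

end Integrability

section Objective

variable {X : Type*} [MeasurableSpace X]

/-- The term of the supremum `D^Ralf(P, Q)` at the critic `C`. -/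
noncomputable def ralfObjective (f : ℝ → ℝ) (P Q : Measure X) (C : X → ℝ) : ℝ :=
  ∫ x, f (C x - ∫ y, C y ∂Q) ∂P

variable {f : ℝ → ℝ} {P Q : Measure X} {C : X → ℝ}

lemma ralfObjective_zero (hf0 : f 0 = 0) : ralfObjective f P Q 0 = 0 := by
  simp [ralfObjective, hf0]

variable [IsProbabilityMeasure P]

lemma ralfObjective_le (hf : Continuous f) {M : ℝ} (hfM : ∀ x, f x ≤ M) (hC : Measurable C)
    (hCb : ∃ K, ∀ x, |C x| ≤ K) : ralfObjective f P Q C ≤ M := by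
  obtain ⟨K, hK⟩ := hCb
  have hK' : ∀ x, |C x - ∫ y, C y ∂Q| ≤ K + |∫ y, C y ∂Q| :=
    fun x => (abs_sub _ _).trans (by gcongr; exact hK x)
  calc ralfObjective f P Q C ≤ ∫ _, M ∂P :=
        integral_mono (hf.integrable_comp_of_abs_le (hC.sub measurable_const) hK')
          (integrable_const M) fun x => hfM _
    _ = M := by simp

lemma ralfObjective_self_nonpos (hconc : ConcaveOn ℝ univ f) (hf0 : f 0 = 0)
    (hC : Measurable C) (hCb : ∃ K, ∀ x, |C x| ≤ K) : ralfObjective f P P C ≤ 0 := by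
  obtain ⟨K, hK⟩ := hCb
  have hcont := hconc.continuous_of_univ
  have hCint : Integrable C P := integrable_of_abs_le hC hK
  set m := ∫ y, C y ∂P
  have hK' : ∀ x, |C x - m| ≤ K + |m| := fun x => (abs_sub _ _).trans (by gcongr; exact hK x)
  have hcentered : ∫ x, (C x - m) ∂P = 0 := by
    rw [integral_sub hCint (integrable_const m)]
    simp [m]
  calc ralfObjective f P P C ≤ f (∫ x, (C x - m) ∂P) :=
        hconc.le_map_integral hcont.continuousOn isClosed_univ (.of_forall fun _ => mem_univ _)
          (hCint.sub (integrable_const m)) (hcont.integrable_comp_of_abs_le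
            (hC.sub measurable_const) hK')
    _ = 0 := by rw [hcentered, hf0]

lemma ralfObjective_indicator {A : Set X} (hA : MeasurableSet A)
    (t : ℝ) : ralfObjective f P Q (A.indicator fun _ => t) =
      P.real A * f ((1 - Q.real A) * t) + (1 - P.real A) * f (-Q.real A * t) := by
  have hpointwise : ∀ x, f (A.indicator (fun _ => t) x - Q.real A * t) =
      A.indicator (fun _ => f ((1 - Q.real A) * t) - f (-Q.real A * t)) x
        + f (-Q.real A * t) := by
    intro x
    by_cases hx : x ∈ A
    · simp only [indicator_of_mem hx]; ring_nf
    · simp only [indicator_of_notMem hx]; ring_nf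
  rw [ralfObjective, integral_indicator_const _ hA, smul_eq_mul, funext hpointwise,
    integral_add ((integrable_const _).indicator hA) (integrable_const _),
    integral_indicator_const _ hA, integral_const]
  simp only [probReal_univ, smul_eq_mul]
  ring

end Objective

lemma hasDerivAt_mix_comp_mul {f : ℝ → ℝ} (hf : DifferentiableAt ℝ f 0) (p q : ℝ) :
    HasDerivAt (fun t => p * f ((1 - q) * t) + (1 - p) * f (-q * t)) (deriv f 0 * (p - q)) 0 := by
  have hcomp : ∀ a : ℝ, HasDerivAt (fun t => f (a * t)) (deriv f 0 * a) 0 := fun a => by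
    have hf' : HasDerivAt f (deriv f 0) (a * 0) := by simpa using hf.hasDerivAt
    exact hf'.comp 0 (by simpa using (hasDerivAt_id (0 : ℝ)).const_mul a)
  exact (((hcomp (1 - q)).const_mul p).add ((hcomp (-q)).const_mul (1 - p))).congr_deriv (by ring)

theorem DRalf_is_divergence_general
    {X : Type*} [MeasurableSpace X]
    (f : ℝ → ℝ)
    (hf : ∀ x y α : ℝ, 0 ≤ α → α ≤ 1 →
      α * f x + (1 - α) * f y ≤ f (α * x + (1 - α) * y))
    (hf0 : f 0 = 0)
    (hderiv : deriv f 0 ≠ 0)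
    (hbdd : BddAbove (Set.range f))
    (P Q : Measure X) [IsProbabilityMeasure P] [IsProbabilityMeasure Q]
    (DRalf : ℝ)
    (hDRalf : DRalf = ⨆ C : {C : X → ℝ // Measurable C ∧ ∃ M : ℝ, ∀ x, |C x| ≤ M},
      ∫ x, f (C.1 x - ∫ y, C.1 y ∂Q) ∂P) :
    0 ≤ DRalf ∧ (DRalf = 0 ↔ P = Q) := by
  have hconc := concaveOn_univ_of_forall hf
  obtain ⟨M, hM⟩ := hbdd
  have hbddT : BddAbove (range fun C : {C : X → ℝ // Measurable C ∧ ∃ M : ℝ, ∀ x, |C x| ≤ M} =>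
      ralfObjective f P Q C.1) :=
    ⟨M, forall_mem_range.mpr fun C => ralfObjective_le hconc.continuous_of_univ (fun x => hM ⟨x, rfl⟩) C.2.1 C.2.2⟩
  have hle : ∀ C : X → ℝ, Measurable C → (∃ M : ℝ, ∀ x, |C x| ≤ M) →
      ralfObjective f P Q C ≤ DRalf :=
    fun C hC hCb => hDRalf ▸ le_ciSup hbddT ⟨C, hC, hCb⟩
  have hnonneg : 0 ≤ DRalf :=
    ralfObjective_zero (P := P) (Q := Q) hf0 ▸ hle 0 measurable_const ⟨0, by simp⟩
  refine ⟨hnonneg, fun h0 => Measure.ext fun A hA => ?_, fun hPQ => ?_⟩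
  · have hmax : IsLocalMax
        (fun t => P.real A * f ((1 - Q.real A) * t) + (1 - P.real A) * f (-Q.real A * t)) 0 :=
      .of_forall fun t => by
        simpa [ralfObjective_indicator hA, hf0, h0] using hle _ (measurable_const.indicator hA)
          ⟨|t|, fun x => norm_indicator_le_norm_self (fun _ => t) x⟩
    have hderiv0 := hmax.hasDerivAt_eq_zero
      (hasDerivAt_mix_comp_mul (differentiableAt_of_deriv_ne_zero hderiv) _ _)
    rw [← measureReal_eq_measureReal_iff]
    exact sub_eq_zero.mp ((mul_eq_zero.mp hderiv0).resolve_left hderiv)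
  · subst hPQ
    exact le_antisymm
      (hDRalf ▸ Real.iSup_nonpos fun C => ralfObjective_self_nonpos hconc hf0 C.2.1 C.2.2) hnonneg

/-- The one-way relativistic average objective `D^Ralf` (supremum over bounded measurable
critics) is nonnegative, and vanishes iff `P = Q`. -/
theorem DRalf_is_divergence
    {X : Type*} [MeasurableSpace X]
    (f : ℝ → ℝ)
    (hf : ∀ x y α : ℝ, 0 ≤ α → α ≤ 1 →
      α * f x + (1 - α) * f y ≤ f (α * x + (1 - α) * y))
    (hf0 : f 0 = 0)
    (hdiff : DifferentiableAt ℝ f 0)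
    (hderiv : deriv f 0 ≠ 0)
    (hbdd : BddAbove (Set.range f))
    (hsup : 0 < ⨆ x, f x)
    (hpos : ∃ xs : ℝ, 0 < xs ∧ 0 < f xs)
    (P Q : Measure X) [IsProbabilityMeasure P] [IsProbabilityMeasure Q]
    (DRalf : ℝ)
    (hDRalf : DRalf = ⨆ C : {C : X → ℝ // Measurable C ∧ ∃ M : ℝ, ∀ x, |C x| ≤ M},
      ∫ x, f (C.1 x - ∫ y, C.1 y ∂Q) ∂P) :
    0 ≤ DRalf ∧ (DRalf = 0 ↔ P = Q) :=
  DRalf_is_divergence_general f hf hf0 hderiv hbdd P Q DRalf hDRalf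
end

section
/- Let f : ℝ → ℝ be a concave function such that f(0) = 0, f is differentiable at 0 with f'(0) ≠ 0, f is bounded above with sup f > 0, and there exists x* > 0 with f(x*) > 0. Let P and Q be probability measures on a measurable space X. Define D^Ra(P, Q) = ⨆_C [ ∫ f(C(x) − ∫ C(y) dQ(y)) dP(x) + ∫ f(∫ C(x) dP(x) − C(y)) dQ(y) ], where the supremum is taken over all bounded measurable functions C : X → ℝ. Then D^Ra(P, Q) ≥ 0, and D^Ra(P, Q) = 0 if and only if P = Q. -/
open MeasureTheory

/-- Integral of a two-valued measurable function on a probability space. -/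
lemma DRa_aux_int {X : Type*} [MeasurableSpace X] (μ : Measure X) [IsProbabilityMeasure μ]
    {A : Set X} (hA : MeasurableSet A) (u v : ℝ) (g : X → ℝ)
    (hgu : ∀ x, x ∈ A → g x = u) (hgv : ∀ x, x ∉ A → g x = v) :
    ∫ x, g x ∂μ = (μ A).toReal * u + (1 - (μ A).toReal) * v := by
  have hrep : g = fun x => A.indicator (fun _ => u - v) x + v := by
    funext x
    by_cases hx : x ∈ A
    · simp [Set.indicator_of_mem hx, hgu x hx]
    · simp [Set.indicator_of_notMem hx, hgv x hx]
  rw [hrep, integral_add ((integrable_const (u - v)).indicator hA) (integrable_const v),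
    integral_indicator_const _ hA, integral_const]
  simp [measure_univ, measureReal_def]
  ring

/-- The relativistic average objective `D^Ra` (supremum over bounded measurable critics) is
nonnegative, and vanishes iff `P = Q`. -/
theorem DRa_is_divergence
    {X : Type*} [MeasurableSpace X]
    (f : ℝ → ℝ)
    (hf : ∀ x y α : ℝ, 0 ≤ α → α ≤ 1 →
      α * f x + (1 - α) * f y ≤ f (α * x + (1 - α) * y))
    (hf0 : f 0 = 0)
    (hdiff : DifferentiableAt ℝ f 0)
    (hderiv : deriv f 0 ≠ 0)
    (hbdd : BddAbove (Set.range f))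
    (hsup : 0 < ⨆ x, f x)
    (hpos : ∃ xs : ℝ, 0 < xs ∧ 0 < f xs)
    (P Q : Measure X) [IsProbabilityMeasure P] [IsProbabilityMeasure Q]
    (DRa : ℝ)
    (hDRa : DRa = ⨆ C : {C : X → ℝ // Measurable C ∧ ∃ M : ℝ, ∀ x, |C x| ≤ M},
      (∫ x, f (C.1 x - ∫ y, C.1 y ∂Q) ∂P) + (∫ y, f ((∫ x, C.1 x ∂P) - C.1 y) ∂Q)) :
    0 ≤ DRa ∧ (DRa = 0 ↔ P = Q) := by
  classical
  obtain ⟨sB, hsBmem⟩ := hbdd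
  have hsB : ∀ t, f t ≤ sB := fun t => hsBmem ⟨t, rfl⟩
  have hsB0 : 0 ≤ sB := hf0 ▸ hsB 0
  -- concavity and continuity of f
  have hconc : ConcaveOn ℝ Set.univ f := by
    refine ⟨convex_univ, ?_⟩
    intro x _ y _ a b ha hb hab
    have hb' : b = 1 - a := by linarith
    subst hb'
    have := hf x y a ha (by linarith)
    simpa [smul_eq_mul] using this
  have hcont : Continuous f := by
    rw [← continuousOn_univ]
    exact hconc.continuousOn isOpen_univ
  -- the index type of critics
  set K := {C : X → ℝ // Measurable C ∧ ∃ M : ℝ, ∀ x, |C x| ≤ M} with hK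
  set V : K → ℝ := fun C =>
    (∫ x, f (C.1 x - ∫ y, C.1 y ∂Q) ∂P) + (∫ y, f ((∫ x, C.1 x ∂P) - C.1 y) ∂Q) with hV
  have hC0 : (⟨fun _ => 0, measurable_const, 0, fun x => by simp⟩ : K) = _ := rfl
  haveI : Nonempty K := ⟨⟨fun _ => 0, measurable_const, 0, fun x => by simp⟩⟩
  -- generic bound on integrals of functions bounded by sB
  have intle : ∀ (μ : Measure X), IsProbabilityMeasure μ → ∀ g : X → ℝ,
      (∀ x, g x ≤ sB) → ∫ x, g x ∂μ ≤ sB := by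
    intro μ hμ g hg
    haveI := hμ
    by_cases hint : Integrable g μ
    · calc ∫ x, g x ∂μ ≤ ∫ _x, sB ∂μ := integral_mono hint (integrable_const _) hg
        _ = sB := by simp
    · rw [integral_undef hint]; exact hsB0
  have hbdd2 : BddAbove (Set.range V) := by
    refine ⟨sB + sB, ?_⟩
    rintro v ⟨C, rfl⟩
    exact add_le_add (intle P inferInstance _ fun x => hsB _)
      (intle Q inferInstance _ fun y => hsB _)
  -- value of the zero critic
  have hVzero : V ⟨fun _ => 0, measurable_const, 0, fun x => by simp⟩ = 0 := by
    simp [hV, hf0]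
  have hge : 0 ≤ DRa := by
    rw [hDRa]
    calc (0:ℝ) = V ⟨fun _ => 0, measurable_const, 0, fun x => by simp⟩ := hVzero.symm
      _ ≤ ⨆ C : K, V C := le_ciSup hbdd2 _
  refine ⟨hge, ?_, ?_⟩
  · -- DRa = 0 → P = Q
    intro hzero
    by_contra hne
    obtain ⟨A, hA, hPQA⟩ : ∃ A, MeasurableSet A ∧ P A ≠ Q A := by
      by_contra h
      push_neg at h
      exact hne (Measure.ext fun s hs => h s hs)
    set p := (P A).toReal with hp
    set q := (Q A).toReal with hq
    have hpq : p ≠ q := fun h =>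
      hPQA ((ENNReal.toReal_eq_toReal_iff' (measure_ne_top P A) (measure_ne_top Q A)).mp h)
    -- the one-parameter family of critic values
    set g : ℝ → ℝ := fun c =>
      p * f (c * (1 - q)) + (1 - p) * f (c * (-q)) +
        (q * f (c * (p - 1)) + (1 - q) * f (c * p)) with hgdef
    have hk : ∀ k : ℝ, HasDerivAt (fun c => f (c * k)) (deriv f 0 * k) 0 := by
      intro k
      have h1 : HasDerivAt (fun c : ℝ => c * k) k 0 := by
        simpa using (hasDerivAt_id (0 : ℝ)).mul_const k
      have h2 : HasDerivAt f (deriv f 0) ((0 : ℝ) * k) := by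
        simpa using hdiff.hasDerivAt
      exact h2.comp 0 h1
    have hgd : HasDerivAt g (2 * deriv f 0 * (p - q)) 0 := by
      have := (((hk (1 - q)).const_mul p).add ((hk (-q)).const_mul (1 - p))).add
        (((hk (p - 1)).const_mul q).add ((hk p).const_mul (1 - q)))
      exact this.congr_deriv (by ring)
    have hg0 : g 0 = 0 := by simp [hgdef, hf0]
    have hex : ∃ c : ℝ, 0 < g c := by
      by_contra hno
      push_neg at hno
      have hmax : IsLocalMax g 0 :=
        Filter.Eventually.of_forall fun c => by rw [hg0]; exact hno c
      have := hmax.hasDerivAt_eq_zero hgd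
      exact (mul_ne_zero (mul_ne_zero two_ne_zero hderiv) (sub_ne_zero.mpr hpq)) this
    obtain ⟨c, hc⟩ := hex
    -- the critic c · 1_A
    set Cc : K := ⟨A.indicator fun _ => c, measurable_const.indicator hA, |c|, fun x => by
      by_cases hx : x ∈ A
      · simp [Set.indicator_of_mem hx]
      · simp [Set.indicator_of_notMem hx, abs_nonneg]⟩ with hCc
    have hmQ : (∫ y, Cc.1 y ∂Q) = q * c := by
      have := DRa_aux_int Q hA c 0 Cc.1
        (fun x hx => by simp [hCc, Set.indicator_of_mem hx])
        (fun x hx => by simp [hCc, Set.indicator_of_notMem hx])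
      simpa using this
    have hmP : (∫ x, Cc.1 x ∂P) = p * c := by
      have := DRa_aux_int P hA c 0 Cc.1
        (fun x hx => by simp [hCc, Set.indicator_of_mem hx])
        (fun x hx => by simp [hCc, Set.indicator_of_notMem hx])
      simpa using this
    have hterm1 : (∫ x, f (Cc.1 x - ∫ y, Cc.1 y ∂Q) ∂P)
        = p * f (c * (1 - q)) + (1 - p) * f (c * (-q)) := by
      rw [hmQ]
      have := DRa_aux_int P hA (f (c * (1 - q))) (f (c * (-q)))
        (fun x => f (Cc.1 x - q * c))
        (fun x hx => by
          simp only [hCc, Set.indicator_of_mem hx]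
          congr 1; ring)
        (fun x hx => by
          simp only [hCc, Set.indicator_of_notMem hx]
          congr 1; ring)
      rw [this]
    have hterm2 : (∫ y, f ((∫ x, Cc.1 x ∂P) - Cc.1 y) ∂Q)
        = q * f (c * (p - 1)) + (1 - q) * f (c * p) := by
      rw [hmP]
      have := DRa_aux_int Q hA (f (c * (p - 1))) (f (c * p))
        (fun y => f (p * c - Cc.1 y))
        (fun y hy => by
          simp only [hCc, Set.indicator_of_mem hy]
          congr 1; ring)
        (fun y hy => by
          simp only [hCc, Set.indicator_of_notMem hy]
          congr 1; ring)
      rw [this]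
    have hVCc : V Cc = g c := by
      rw [hV]
      dsimp only
      rw [hterm1, hterm2, hgdef]
    have : g c ≤ DRa := by
      rw [hDRa, ← hVCc]
      exact le_ciSup hbdd2 Cc
    rw [hzero] at this
    linarith
  · -- P = Q → DRa = 0
    intro hPQ
    subst hPQ
    rw [hDRa]
    refine le_antisymm (ciSup_le ?_) (by rw [hDRa] at hge; exact hge)
    intro C
    obtain ⟨hmeas, M', hM'⟩ := C.2
    set M := max M' 0 with hMdef
    have hM : ∀ x, |C.1 x| ≤ M := fun x => (hM' x).trans (le_max_left _ _)
    have hM0 : 0 ≤ M := le_max_right _ _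
    set m := ∫ x, C.1 x ∂P with hm
    -- boundedness of the integrands
    obtain ⟨Kb, hKb⟩ : ∃ Kb, ∀ t ∈ Set.Icc (-(M + |m|)) (M + |m|), ‖f t‖ ≤ Kb :=
      (isCompact_Icc).exists_bound_of_continuousOn hcont.continuousOn
    have hmemIcc : ∀ t : ℝ, |t| ≤ M + |m| → t ∈ Set.Icc (-(M + |m|)) (M + |m|) := by
      intro t ht
      rw [Set.mem_Icc, ← abs_le]
      exact ht
    have hint1 : Integrable (fun x => f (C.1 x - m)) P := by
      refine ⟨(hcont.measurable.comp (hmeas.sub measurable_const)).aestronglyMeasurable, ?_⟩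
      apply HasFiniteIntegral.of_bounded (C := Kb)
      filter_upwards with x
      refine hKb _ (hmemIcc _ ?_)
      calc |C.1 x - m| ≤ |C.1 x| + |m| := abs_sub _ _
        _ ≤ M + |m| := by linarith [hM x]
    have hint2 : Integrable (fun y => f (m - C.1 y)) P := by
      refine ⟨(hcont.measurable.comp (measurable_const.sub hmeas)).aestronglyMeasurable, ?_⟩
      apply HasFiniteIntegral.of_bounded (C := Kb)
      filter_upwards with x
      refine hKb _ (hmemIcc _ ?_)
      calc |m - C.1 x| = |C.1 x - m| := abs_sub_comm _ _
        _ ≤ |C.1 x| + |m| := abs_sub _ _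
        _ ≤ M + |m| := by linarith [hM x]
    have hpt : ∀ x, f (C.1 x - m) + f (m - C.1 x) ≤ 0 := by
      intro x
      have h := hf (C.1 x - m) (m - C.1 x) (1/2) (by norm_num) (by norm_num)
      have harg : (1/2 : ℝ) * (C.1 x - m) + (1 - 1/2) * (m - C.1 x) = 0 := by ring
      rw [harg, hf0] at h
      linarith
    calc (∫ x, f (C.1 x - ∫ y, C.1 y ∂P) ∂P) + (∫ y, f ((∫ x, C.1 x ∂P) - C.1 y) ∂P)
        = ∫ x, (f (C.1 x - m) + f (m - C.1 x)) ∂P := (integral_add hint1 hint2).symm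
      _ ≤ 0 := integral_nonpos hpt
end

section
/- Let f : ℝ → ℝ be a concave function such that f(0) = 0, f is differentiable at 0 with f'(0) ≠ 0, f is bounded above with sup f > 0, and there exists x* > 0 with f(x*) > 0. Let P and Q be probability measures on a measurable space X and let M = (1/2)·P + (1/2)·Q. Define D^Rc(P, Q) = ⨆_C [ ∫ f(C(x) − ∫ C(m) dM(m)) dP(x) + ∫ f(∫ C(m) dM(m) − C(y)) dQ(y) ], where the supremum is taken over all bounded measurable functions C : X → ℝ. Then D^Rc(P, Q) ≥ 0, and D^Rc(P, Q) = 0 if and only if P = Q. -/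
open MeasureTheory Set
open scoped ENNReal

/-!
Concavity and `f 0 = 0` give `f u + f (-u) ≤ 0`, so when `P = Q` every critic scores at most `0`,
while the zero critic scores `0`. If `P s ≠ Q s`, the score of the critic `t • 𝟙_s` is
differentiable in `t`, vanishes at `t = 0` and has derivative `f'(0) (P s - Q s) ≠ 0` there (the
centring terms cancel), so some `t` gives a positive score.
-/

lemma ConcaveOn.add_neg_le_two_mul {f : ℝ → ℝ} (hf : ConcaveOn ℝ univ f) (a : ℝ) :
    f a + f (-a) ≤ 2 * f 0 := by
  have h := hf.2 (mem_univ a) (mem_univ (-a)) (by norm_num : (0 : ℝ) ≤ 1 / 2)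
    (by norm_num : (0 : ℝ) ≤ 1 / 2) (by norm_num)
  simp only [smul_eq_mul] at h
  rw [show 1 / 2 * a + 1 / 2 * -a = 0 by ring] at h
  linarith

lemma HasDerivAt.exists_lt_of_ne_zero {g : ℝ → ℝ} {d a : ℝ} (hg : HasDerivAt g d a) (hd : d ≠ 0) :
    ∃ t, g a < g t := by
  by_contra! h
  exact hd (IsLocalMax.hasDerivAt_eq_zero (Filter.Eventually.of_forall h) hg)

noncomputable section
variable {X : Type*} [MeasurableSpace X]

lemma Continuous.integrable_comp_of_bounded {f : ℝ → ℝ} (hf : Continuous f) {μ : Measure X}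
    [IsFiniteMeasure μ] {g : X → ℝ} (hg : Measurable g) {B : ℝ} (hB : ∀ x, |g x| ≤ B) :
    Integrable (fun x => f (g x)) μ := by
  obtain ⟨K, hK⟩ := (isCompact_Icc (a := -B) (b := B)).exists_bound_of_continuousOn
    hf.continuousOn
  exact .of_bound (hf.measurable.comp hg).aestronglyMeasurable K
    (Filter.Eventually.of_forall fun x => hK _ (abs_le.1 (hB x)))

lemma integral_le_of_forall_le_of_nonneg {μ : Measure X} [IsProbabilityMeasure μ] {g : X → ℝ}
    {S : ℝ} (hS : 0 ≤ S) (hg : ∀ x, g x ≤ S) : ∫ x, g x ∂μ ≤ S := by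
  by_cases hint : Integrable g μ
  · simpa using integral_mono hint (integrable_const S) hg
  · rw [integral_undef hint]; exact hS

lemma integral_comp_indicator_const {μ : Measure X} [IsProbabilityMeasure μ] {s : Set X}
    (hs : MeasurableSet s) (φ : ℝ → ℝ) (t : ℝ) :
    ∫ x, φ (s.indicator (fun _ => t) x) ∂μ = μ.real s * φ t + (1 - μ.real s) * φ 0 := by
  classical
  have h : (fun x => φ (s.indicator (fun _ => t) x)) = s.piecewise (fun _ => φ t) fun _ => φ 0 := by
    ext x
    by_cases hx : x ∈ s <;> simp [hx]
  rw [h, integral_piecewise hs integrableOn_const integrableOn_const, setIntegral_const,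
    setIntegral_const, probReal_compl_eq_one_sub hs, smul_eq_mul, smul_eq_mul]

lemma exists_measureReal_ne_of_ne {P Q : Measure X} [IsFiniteMeasure P] [IsFiniteMeasure Q]
    (h : P ≠ Q) : ∃ s, MeasurableSet s ∧ P.real s ≠ Q.real s := by
  contrapose! h
  exact Measure.ext fun s hs => (measureReal_eq_measureReal_iff).1 (h s hs)

abbrev BoundedCritic (X : Type*) [MeasurableSpace X] :=
  {C : X → ℝ // Measurable C ∧ ∃ B : ℝ, ∀ x, |C x| ≤ B}

def BoundedCritic.indicator {s : Set X} (hs : MeasurableSet s) (t : ℝ) : BoundedCritic X :=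
  ⟨s.indicator fun _ => t, measurable_const.indicator hs, |t|, fun x => by
    by_cases hx : x ∈ s <;> simp [hx]⟩

def criticObjective (f : ℝ → ℝ) (M P Q : Measure X) (C : X → ℝ) : ℝ :=
  (∫ x, f (C x - ∫ m, C m ∂M) ∂P) + ∫ y, f ((∫ m, C m ∂M) - C y) ∂Q

variable {f : ℝ → ℝ} {M P Q : Measure X}

@[simp]
lemma criticObjective_const_zero [IsProbabilityMeasure P] [IsProbabilityMeasure Q] :
    criticObjective f M P Q (fun _ => 0) = 2 * f 0 := by
  simp [criticObjective, two_mul]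

lemma criticObjective_le_two_mul [IsProbabilityMeasure P] [IsProbabilityMeasure Q] {S : ℝ}
    (hfS : ∀ u, f u ≤ S) (hS : 0 ≤ S) (C : X → ℝ) : criticObjective f M P Q C ≤ 2 * S := by
  have hP := integral_le_of_forall_le_of_nonneg (μ := P) hS fun x => hfS (C x - ∫ m, C m ∂M)
  have hQ := integral_le_of_forall_le_of_nonneg (μ := Q) hS fun y => hfS ((∫ m, C m ∂M) - C y)
  unfold criticObjective
  linarith

lemma criticObjective_self_nonpos (hf : ConcaveOn ℝ univ f) (hf0 : f 0 = 0) [IsFiniteMeasure P]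
    (C : BoundedCritic X) : criticObjective f M P P C.1 ≤ 0 := by
  obtain ⟨C, hC, B, hB⟩ := C
  have hcont : Continuous f := continuousOn_univ.1 (hf.continuousOn isOpen_univ)
  set c := ∫ m, C m ∂M
  have hbound : ∀ x, |C x - c| ≤ B + |c| := fun x =>
    (abs_sub _ _).trans (by linarith [hB x])
  have hbound' : ∀ x, |c - C x| ≤ B + |c| := fun x => abs_sub_comm (C x) c ▸ hbound x
  rw [criticObjective, ← integral_add (hcont.integrable_comp_of_bounded (hC.sub_const c) hbound)
    (hcont.integrable_comp_of_bounded (hC.const_sub c) hbound')]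
  refine integral_nonpos fun x => ?_
  simpa [hf0, neg_sub] using hf.add_neg_le_two_mul (C x - c)

lemma criticObjective_indicator [IsProbabilityMeasure P] [IsProbabilityMeasure Q] {s : Set X}
    (hs : MeasurableSet s) (t : ℝ) :
    criticObjective f M P Q (s.indicator fun _ => t) =
      P.real s * f ((1 - M.real s) * t) + (1 - P.real s) * f (-M.real s * t) +
        (Q.real s * f ((M.real s - 1) * t) + (1 - Q.real s) * f (M.real s * t)) := by
  rw [criticObjective, integral_indicator_const t hs, smul_eq_mul,
    integral_comp_indicator_const hs (fun u => f (u - M.real s * t)),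
    integral_comp_indicator_const hs (fun u => f (M.real s * t - u))]
  simp only [sub_zero, zero_sub, neg_mul, one_sub_mul, sub_one_mul]

lemma hasDerivAt_criticObjective_indicator [IsProbabilityMeasure P] [IsProbabilityMeasure Q]
    {d : ℝ} (hf : HasDerivAt f d 0) {s : Set X} (hs : MeasurableSet s) :
    HasDerivAt (fun t => criticObjective f M P Q (s.indicator fun _ => t))
      (d * (P.real s - Q.real s)) 0 := by
  have hscale : ∀ a : ℝ, HasDerivAt (fun t => f (a * t)) (d * a) 0 := fun a => by
    have h := hf.comp_of_eq (0 : ℝ) ((hasDerivAt_id' 0).const_mul a) (mul_zero a).symm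
    simpa [Function.comp_def, mul_comm] using h
  simp_rw [criticObjective_indicator hs]
  refine ((((hscale _).const_mul (P.real s)).add ((hscale _).const_mul (1 - P.real s))).add
    (((hscale _).const_mul (Q.real s)).add ((hscale _).const_mul (1 - Q.real s)))).congr_deriv ?_
  ring

end

theorem DRc_is_divergence_general
    {X : Type*} [MeasurableSpace X]
    (f : ℝ → ℝ)
    (hf : ∀ x y α : ℝ, 0 ≤ α → α ≤ 1 →
      α * f x + (1 - α) * f y ≤ f (α * x + (1 - α) * y))
    (hf0 : f 0 = 0)
    (hdiff : DifferentiableAt ℝ f 0)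
    (hderiv : deriv f 0 ≠ 0)
    (hbdd : BddAbove (Set.range f))
    (P Q : Measure X) [IsProbabilityMeasure P] [IsProbabilityMeasure Q]
    (M : Measure X)
    (DRc : ℝ)
    (hDRc : DRc = ⨆ C : {C : X → ℝ // Measurable C ∧ ∃ B : ℝ, ∀ x, |C x| ≤ B},
      (∫ x, f (C.1 x - ∫ m, C.1 m ∂M) ∂P) + (∫ y, f ((∫ m, C.1 m ∂M) - C.1 y) ∂Q)) :
    0 ≤ DRc ∧ (DRc = 0 ↔ P = Q) := by
  change DRc = ⨆ C : BoundedCritic X, criticObjective f M P Q C.1 at hDRc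
  have hconc : ConcaveOn ℝ univ f := ⟨convex_univ, fun x _ y _ a b ha hb hab => by
    obtain rfl : b = 1 - a := by linarith
    simpa using hf x y a ha (by linarith)⟩
  obtain ⟨S, hS⟩ := hbdd
  have hfS : ∀ u, f u ≤ S := fun u => hS ⟨u, rfl⟩
  have hbddObj : BddAbove (range fun C : BoundedCritic X => criticObjective f M P Q C.1) :=
    ⟨2 * S, forall_mem_range.2 fun C => criticObjective_le_two_mul hfS (hf0 ▸ hfS 0) C.1⟩
  have hle : ∀ {s : Set X} (hs : MeasurableSet s) (t : ℝ),
      criticObjective f M P Q (s.indicator fun _ => t) ≤ DRc :=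
    fun hs t => hDRc ▸ le_ciSup hbddObj (.indicator hs t)
  have hnonneg : 0 ≤ DRc := by simpa [hf0] using hle MeasurableSet.empty 0
  refine ⟨hnonneg, fun hD => ?_, fun hPQ => ?_⟩
  · by_contra hPQ
    obtain ⟨s, hs, hPQs⟩ := exists_measureReal_ne_of_ne hPQ
    obtain ⟨t, ht⟩ := (hasDerivAt_criticObjective_indicator (M := M) hdiff.hasDerivAt hs)
      |>.exists_lt_of_ne_zero (mul_ne_zero hderiv (sub_ne_zero.2 hPQs))
    simp only [indicator_zero, criticObjective_const_zero, hf0, mul_zero] at ht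
    linarith [hle hs t]
  · subst hPQ
    have : Nonempty (BoundedCritic X) := ⟨.indicator MeasurableSet.empty 0⟩
    exact le_antisymm (hDRc ▸ ciSup_le fun C => criticObjective_self_nonpos hconc hf0 C) hnonneg

/-- The relativistic centered objective `D^Rc` (supremum over bounded measurable critics,
centering by the mixture `M = ½P + ½Q`) is nonnegative, and vanishes iff `P = Q`. -/
theorem DRc_is_divergence
    {X : Type*} [MeasurableSpace X]
    (f : ℝ → ℝ)
    (hf : ∀ x y α : ℝ, 0 ≤ α → α ≤ 1 →
      α * f x + (1 - α) * f y ≤ f (α * x + (1 - α) * y))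
    (hf0 : f 0 = 0)
    (hdiff : DifferentiableAt ℝ f 0)
    (hderiv : deriv f 0 ≠ 0)
    (hbdd : BddAbove (Set.range f))
    (hsup : 0 < ⨆ x, f x)
    (hpos : ∃ xs : ℝ, 0 < xs ∧ 0 < f xs)
    (P Q : Measure X) [IsProbabilityMeasure P] [IsProbabilityMeasure Q]
    (M : Measure X) (hM : M = (1/2 : ℝ≥0∞) • P + (1/2 : ℝ≥0∞) • Q)
    (DRc : ℝ)
    (hDRc : DRc = ⨆ C : {C : X → ℝ // Measurable C ∧ ∃ B : ℝ, ∀ x, |C x| ≤ B},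
      (∫ x, f (C.1 x - ∫ m, C.1 m ∂M) ∂P) + (∫ y, f ((∫ m, C.1 m ∂M) - C.1 y) ∂Q)) :
    0 ≤ DRc ∧ (DRc = 0 ↔ P = Q) :=
  DRc_is_divergence_general f hf hf0 hdiff hderiv hbdd P Q M DRc hDRc
end

section
/- Let f : ℝ → ℝ be a concave function bounded above, with f(0) = 0. Let P and Q be probability measures on a measurable space X. Then ⨆_C [ ∫ f(C(x)) dP(x) + ∫ f(−C(y)) dQ(y) ] ≤ ⨆_C 2·∫∫ f(C(x) − C(y)) d(P ⊗ Q)(x, y), where both suprema are taken over all bounded measurable functions C : X → ℝ. In particular, for any bounded measurable C, ∫ f(C(x)) dP(x) + ∫ f(−C(y)) dQ(y) ≤ 2·∫∫ f(C(x)/2 − C(y)/2) d(P ⊗ Q)(x, y). -/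
open MeasureTheory

section Aux

variable (f : ℝ → ℝ)
  (hf : ∀ x y α : ℝ, 0 ≤ α → α ≤ 1 →
    α * f x + (1 - α) * f y ≤ f (α * x + (1 - α) * y))

include hf in
lemma aux_concave : ConcaveOn ℝ Set.univ f := by
  refine ⟨convex_univ, fun x _ y _ a b ha hb hab => ?_⟩
  have hb' : b = 1 - a := by linarith
  have := hf x y a ha (by linarith)
  simpa [smul_eq_mul, hb'] using this

include hf in
lemma aux_cont : Continuous f := by
  have := (aux_concave f hf).continuousOn isOpen_univ
  exact continuousOn_univ.mp this

include hf in
lemma aux_half (a b : ℝ) : f a + f b ≤ 2 * f (a / 2 + b / 2) := by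
  have := hf a b (1/2) (by norm_num) (by norm_num)
  have h2 : (1:ℝ)/2 * a + (1 - 1/2) * b = a / 2 + b / 2 := by ring
  rw [h2] at this
  linarith

include hf in
lemma aux_abs_bound (hbdd : BddAbove (Set.range f)) (K : ℝ) (hK : 0 ≤ K) :
    ∃ R : ℝ, ∀ z, |z| ≤ K → |f z| ≤ R := by
  obtain ⟨B, hB⟩ := hbdd
  have hB' : ∀ z, f z ≤ B := fun z => hB (Set.mem_range_self z)
  refine ⟨max B (-(min (f (-K)) (f K))), fun z hz => ?_⟩
  rw [abs_le] at hz ⊢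
  constructor
  · -- lower bound from concavity at endpoints
    have hgt : 0 ≤ K + z := by linarith [hz.1]
    rcases eq_or_lt_of_le hK with heq | hKpos
    · have hz0 : z = 0 := by
        have := hz.1; have := hz.2; rw [← heq] at *; linarith
      subst hz0
      have : min (f (-K)) (f K) ≤ f 0 := by
        rw [← heq]; simp [min_self]
      have h1 : -(max B (-(min (f (-K)) (f K)))) ≤ min (f (-K)) (f K) := by
        have := le_max_right B (-(min (f (-K)) (f K))); linarith
      linarith
    · set α : ℝ := (K - z) / (2 * K) with hα
      have h2K : (0:ℝ) < 2 * K := by linarith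
      have hα0 : 0 ≤ α := div_nonneg (by linarith [hz.2]) h2K.le
      have hα1 : α ≤ 1 := by
        rw [div_le_one h2K]; linarith [hz.1]
      have hcomb : α * (-K) + (1 - α) * K = z := by
        have h : α * (2 * K) = K - z := by rw [hα]; exact div_mul_cancel₀ _ h2K.ne'
        linear_combination -h
      have := hf (-K) K α hα0 hα1
      rw [hcomb] at this
      have hmin1 : min (f (-K)) (f K) ≤ f (-K) := min_le_left _ _
      have hmin2 : min (f (-K)) (f K) ≤ f K := min_le_right _ _
      have hlow : min (f (-K)) (f K) ≤ f z := by
        nlinarith [mul_le_mul_of_nonneg_left hmin1 hα0,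
          mul_le_mul_of_nonneg_left hmin2 (by linarith : (0:ℝ) ≤ 1 - α)]
      have h1 : -(max B (-(min (f (-K)) (f K)))) ≤ min (f (-K)) (f K) := by
        have := le_max_right B (-(min (f (-K)) (f K))); linarith
      linarith
  · exact le_trans (hB' z) (le_max_left _ _)

include hf in
lemma aux_integrable (hbdd : BddAbove (Set.range f))
    {α : Type*} [MeasurableSpace α] (μ : Measure α) [IsFiniteMeasure μ]
    (g : α → ℝ) (hg : Measurable g) (K : ℝ) (hK : ∀ z, |g z| ≤ K) :
    Integrable (fun z => f (g z)) μ := by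
  obtain ⟨R, hR⟩ := aux_abs_bound f hf hbdd (max K 0) (le_max_right _ _)
  refine Integrable.mono' (integrable_const R)
    ((aux_cont f hf).measurable.comp hg).aestronglyMeasurable
    (Filter.Eventually.of_forall fun z => ?_)
  exact hR _ (le_trans (hK z) (le_max_left _ _))

end Aux

/-- The symmetric GAN divergence `D^S` is bounded above by the relativistic paired
divergence `D^Rp`; moreover the per-critic inequality (via concavity) holds. -/
theorem DS_le_DRp
    {X : Type*} [MeasurableSpace X]
    (f : ℝ → ℝ)
    (hf : ∀ x y α : ℝ, 0 ≤ α → α ≤ 1 →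
      α * f x + (1 - α) * f y ≤ f (α * x + (1 - α) * y))
    (hbdd : BddAbove (Set.range f))
    (hf0 : f 0 = 0)
    (P Q : Measure X) [IsProbabilityMeasure P] [IsProbabilityMeasure Q] :
    (⨆ C : {C : X → ℝ // Measurable C ∧ ∃ M : ℝ, ∀ x, |C x| ≤ M},
        (∫ x, f (C.1 x) ∂P) + (∫ y, f (-(C.1 y)) ∂Q))
      ≤ (⨆ C : {C : X → ℝ // Measurable C ∧ ∃ M : ℝ, ∀ x, |C x| ≤ M},
        2 * ∫ p : X × X, f (C.1 p.1 - C.1 p.2) ∂(P.prod Q))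
    ∧ ∀ C : X → ℝ, Measurable C → (∃ M : ℝ, ∀ x, |C x| ≤ M) →
        (∫ x, f (C x) ∂P) + (∫ y, f (-(C y)) ∂Q)
          ≤ 2 * ∫ p : X × X, f (C p.1 / 2 - C p.2 / 2) ∂(P.prod Q) := by
  obtain ⟨B, hB⟩ := hbdd
  have hB' : ∀ z, f z ≤ B := fun z => hB (Set.mem_range_self z)
  have hprob : IsProbabilityMeasure (P.prod Q) := by infer_instance
  -- the per-critic inequality
  have key : ∀ C : X → ℝ, Measurable C → (∃ M : ℝ, ∀ x, |C x| ≤ M) →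
      (∫ x, f (C x) ∂P) + (∫ y, f (-(C y)) ∂Q)
        ≤ 2 * ∫ p : X × X, f (C p.1 / 2 - C p.2 / 2) ∂(P.prod Q) := by
    rintro C hC ⟨M, hM⟩
    set π := P.prod Q with hπ
    have hMK : ∀ x, |C x| ≤ max M 0 := fun x => le_trans (hM x) (le_max_left _ _)
    have i1 : Integrable (fun x => f (C x)) P :=
      aux_integrable f hf ⟨B, hB⟩ P C hC (max M 0) hMK
    have i2 : Integrable (fun y => f (-(C y))) Q := by
      refine aux_integrable f hf ⟨B, hB⟩ Q (fun y => -(C y)) hC.neg (max M 0) ?_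
      intro y; rw [abs_neg]; exact hMK y
    have i1' : Integrable (fun p : X × X => f (C p.1)) π := by
      refine aux_integrable f hf ⟨B, hB⟩ π (fun p => C p.1) (hC.comp measurable_fst)
        (max M 0) fun p => hMK _
    have i2' : Integrable (fun p : X × X => f (-(C p.2))) π := by
      refine aux_integrable f hf ⟨B, hB⟩ π (fun p => -(C p.2))
        ((hC.comp measurable_snd).neg) (max M 0) ?_
      intro p; rw [abs_neg]; exact hMK _
    have i3 : Integrable (fun p : X × X => f (C p.1 / 2 - C p.2 / 2)) π := by
      refine aux_integrable f hf ⟨B, hB⟩ π (fun p => C p.1 / 2 - C p.2 / 2)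
        (((hC.comp measurable_fst).div_const 2).sub
          ((hC.comp measurable_snd).div_const 2)) (max M 0) ?_
      intro p
      have h1 := hMK p.1
      have h2 := hMK p.2
      rw [abs_le] at h1 h2 ⊢
      constructor <;> [linarith [h1.1, h2.2]; linarith [h1.2, h2.1]]
    have e1 : ∫ p : X × X, f (C p.1) ∂π = ∫ x, f (C x) ∂P := by
      rw [MeasureTheory.integral_prod _ i1']
      simp
    have e2 : ∫ p : X × X, f (-(C p.2)) ∂π = ∫ y, f (-(C y)) ∂Q := by
      rw [MeasureTheory.integral_prod _ i2']
      simp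
    calc (∫ x, f (C x) ∂P) + (∫ y, f (-(C y)) ∂Q)
        = ∫ p : X × X, (f (C p.1) + f (-(C p.2))) ∂π := by
          rw [integral_add i1' i2', e1, e2]
      _ ≤ ∫ p : X × X, 2 * f (C p.1 / 2 - C p.2 / 2) ∂π := by
          refine integral_mono (i1'.add i2') (i3.const_mul 2) fun p => ?_
          have := aux_half f hf (C p.1) (-(C p.2))
          have heq : C p.1 / 2 + -(C p.2) / 2 = C p.1 / 2 - C p.2 / 2 := by ring
          rw [heq] at this
          exact this
      _ = 2 * ∫ p : X × X, f (C p.1 / 2 - C p.2 / 2) ∂π := integral_const_mul 2 _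
  refine ⟨?_, key⟩
  -- the supremum inequality
  have hne : Nonempty {C : X → ℝ // Measurable C ∧ ∃ M : ℝ, ∀ x, |C x| ≤ M} :=
    ⟨⟨fun _ => 0, measurable_const, 0, fun x => by simp⟩⟩
  have hbddR : BddAbove (Set.range fun
      C : {C : X → ℝ // Measurable C ∧ ∃ M : ℝ, ∀ x, |C x| ≤ M} =>
      2 * ∫ p : X × X, f (C.1 p.1 - C.1 p.2) ∂(P.prod Q)) := by
    refine ⟨2 * max B 0, ?_⟩
    rintro _ ⟨⟨C, hC, M, hM⟩, rfl⟩
    have hmeas : Measurable fun p : X × X => C p.1 - C p.2 :=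
      (hC.comp measurable_fst).sub (hC.comp measurable_snd)
    have hbnd : ∀ p : X × X, |C p.1 - C p.2| ≤ 2 * max M 0 := by
      intro p
      have h1 := le_trans (hM p.1) (le_max_left M 0)
      have h2 := le_trans (hM p.2) (le_max_left M 0)
      rw [abs_le] at h1 h2 ⊢
      constructor
      · linarith [h1.1, h2.2]
      · linarith [h1.2, h2.1]
    have hint : Integrable (fun p : X × X => f (C p.1 - C p.2)) (P.prod Q) :=
      aux_integrable f hf ⟨B, hB⟩ _ _ hmeas (2 * max M 0) hbnd
    have : ∫ p : X × X, f (C p.1 - C p.2) ∂(P.prod Q) ≤ max B 0 := by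
      calc ∫ p : X × X, f (C p.1 - C p.2) ∂(P.prod Q)
          ≤ ∫ _ : X × X, max B 0 ∂(P.prod Q) :=
            integral_mono hint (integrable_const _)
              fun p => le_trans (hB' _) (le_max_left _ _)
        _ = max B 0 := by simp
    simp only
    linarith
  refine ciSup_le fun C => ?_
  obtain ⟨Cf, hCf, M, hM⟩ := C
  have hhalf : Measurable fun x => Cf x / 2 := hCf.div_const 2
  have hMhalf : ∀ x, |Cf x / 2| ≤ M := fun x => by
    have := hM x
    rw [abs_div, abs_two]
    linarith [abs_nonneg (Cf x)]
  calc (∫ x, f (Cf x) ∂P) + ∫ y, f (-(Cf y)) ∂Q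
      ≤ 2 * ∫ p : X × X, f (Cf p.1 / 2 - Cf p.2 / 2) ∂(P.prod Q) :=
        key Cf hCf ⟨M, hM⟩
    _ ≤ _ := le_ciSup hbddR ⟨fun x => Cf x / 2, hhalf, M, hMhalf⟩
end

section
/- Let f : ℝ → ℝ be a concave function bounded above, with f(0) = 0. Let P and Q be probability measures on a measurable space X. Then ⨆_C 2·∫∫ f(C(x) − C(y)) d(P ⊗ Q)(x, y) ≤ ⨆_C [ ∫ f(C(x) − ∫ C(y) dQ(y)) dP(x) + ∫ f(∫ C(x) dP(x) − C(y)) dQ(y) ], where both suprema are taken over all bounded measurable functions C : X → ℝ. In particular, for any bounded measurable C, 2·∫∫ f(C(x) − C(y)) d(P ⊗ Q)(x, y) ≤ ∫ f(C(x) − ∫ C(y) dQ(y)) dP(x) + ∫ f(∫ C(x) dP(x) − C(y)) dQ(y). -/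
open MeasureTheory

lemma bdd_integrable
    {Y : Type*} [MeasurableSpace Y] (μ : Measure Y) [IsFiniteMeasure μ]
    (g : Y → ℝ) (hg : Measurable g) (K : ℝ) (hK : ∀ y, ‖g y‖ ≤ K) :
    Integrable g μ :=
  (integrable_const K).mono' hg.aestronglyMeasurable
    (Filter.Eventually.of_forall hK)

lemma integral_le_of_le
    {Y : Type*} [MeasurableSpace Y] (μ : Measure Y) [IsProbabilityMeasure μ]
    (g : Y → ℝ) (B : ℝ) (hB0 : 0 ≤ B) (hle : ∀ y, g y ≤ B) :
    (∫ y, g y ∂μ) ≤ B := by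
  by_cases hgi : Integrable g μ
  · calc (∫ y, g y ∂μ) ≤ ∫ _y, B ∂μ := integral_mono hgi (integrable_const B) hle
      _ = B := by simp
  · rw [integral_undef hgi]; exact hB0

lemma key_ineq
    {X : Type*} [MeasurableSpace X]
    (f : ℝ → ℝ)
    (hf : ∀ x y α : ℝ, 0 ≤ α → α ≤ 1 →
      α * f x + (1 - α) * f y ≤ f (α * x + (1 - α) * y))
    (P Q : Measure X) [IsProbabilityMeasure P] [IsProbabilityMeasure Q]
    (C : X → ℝ) (hC : Measurable C) (M : ℝ) (hM : ∀ x, |C x| ≤ M) :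
    2 * (∫ p : X × X, f (C p.1 - C p.2) ∂(P.prod Q))
      ≤ (∫ x, f (C x - ∫ y, C y ∂Q) ∂P) + (∫ y, f ((∫ x, C x ∂P) - C y) ∂Q) := by
  have hconc : ConcaveOn ℝ Set.univ f := by
    refine ⟨convex_univ, ?_⟩
    intro x hx y hy a b ha hb hab
    have hb' : b = 1 - a := by linarith
    subst hb'
    simpa [smul_eq_mul] using hf x y a ha (by linarith)
  have hcont : Continuous f := hconc.locallyLipschitz.continuous
  -- bound on f on the relevant compact set
  obtain ⟨K, hK⟩ := (isCompact_Icc (a := -(2*M)) (b := 2*M)).exists_bound_of_continuousOn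
    hcont.continuousOn
  have hmem : ∀ x y : X, C x - C y ∈ Set.Icc (-(2*M)) (2*M) := by
    intro x y
    have h1 := abs_le.1 (hM x)
    have h2 := abs_le.1 (hM y)
    constructor <;> [linarith [h1.1, h2.2]; linarith [h1.2, h2.1]]
  -- integrability of C
  have hCint : ∀ (μ : Measure X) [IsProbabilityMeasure μ], Integrable C μ := by
    intro μ _
    exact bdd_integrable μ C hC M (fun x => by simpa using hM x)
  have hfint : ∀ (μ : Measure X) [IsProbabilityMeasure μ]
      (g : X → ℝ), Measurable g → (∀ y, g y ∈ Set.Icc (-(2*M)) (2*M)) →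
      Integrable (fun y => f (g y)) μ := by
    intro μ _ g hg hgmem
    exact bdd_integrable μ _ (hcont.measurable.comp hg) K (fun y => hK _ (hgmem y))
  have hprodmeas : Measurable (fun p : X × X => C p.1 - C p.2) :=
    (hC.comp measurable_fst).sub (hC.comp measurable_snd)
  have hprodint : Integrable (fun p : X × X => f (C p.1 - C p.2)) (P.prod Q) :=
    bdd_integrable (P.prod Q) _ (hcont.measurable.comp hprodmeas) K
      (fun p => hK _ (hmem p.1 p.2))
  have habsint : ∀ (μ : Measure X) [IsProbabilityMeasure μ], |∫ x, C x ∂μ| ≤ M := by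
    intro μ _
    calc |∫ x, C x ∂μ| = ‖∫ x, C x ∂μ‖ := (Real.norm_eq_abs _).symm
      _ ≤ ∫ x, ‖C x‖ ∂μ := norm_integral_le_integral_norm C
      _ ≤ ∫ _x, M ∂μ := integral_mono ((hCint μ).norm) (integrable_const M)
          (fun x => by simpa [Real.norm_eq_abs] using hM x)
      _ = M := by simp
  -- Jensen pointwise in x
  have jensen1 : ∀ x : X, (∫ y, f (C x - C y) ∂Q) ≤ f (C x - ∫ y, C y ∂Q) := by
    intro x
    have hfi : Integrable (fun y => C x - C y) Q := (integrable_const (C x)).sub (hCint Q)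
    have hgi : Integrable (fun y => f (C x - C y)) Q :=
      hfint Q (fun y => C x - C y) (measurable_const.sub hC) (fun y => hmem x y)
    have := hconc.le_map_integral hcont.continuousOn isClosed_univ
      (Filter.Eventually.of_forall fun y => Set.mem_univ _) hfi hgi
    have hInt : (∫ y, (C x - C y) ∂Q) = C x - ∫ y, C y ∂Q := by
      rw [integral_sub (integrable_const _) (hCint Q), integral_const]
      simp
    rwa [hInt] at this
  have jensen2 : ∀ y : X, (∫ x, f (C x - C y) ∂P) ≤ f ((∫ x, C x ∂P) - C y) := by
    intro y
    have hfi : Integrable (fun x => C x - C y) P := (hCint P).sub (integrable_const (C y))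
    have hgi : Integrable (fun x => f (C x - C y)) P :=
      hfint P (fun x => C x - C y) (hC.sub measurable_const) (fun x => hmem x y)
    have := hconc.le_map_integral hcont.continuousOn isClosed_univ
      (Filter.Eventually.of_forall fun x => Set.mem_univ _) hfi hgi
    have hInt : (∫ x, (C x - C y) ∂P) = (∫ x, C x ∂P) - C y := by
      rw [integral_sub (hCint P) (integrable_const _), integral_const]
      simp
    rwa [hInt] at this
  -- iterated integrals
  have h1 : (∫ p : X × X, f (C p.1 - C p.2) ∂(P.prod Q))
      = ∫ x, ∫ y, f (C x - C y) ∂Q ∂P := integral_prod _ hprodint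
  have h2 : (∫ p : X × X, f (C p.1 - C p.2) ∂(P.prod Q))
      = ∫ y, ∫ x, f (C x - C y) ∂P ∂Q := integral_prod_symm _ hprodint
  have hint1 : Integrable (fun x => ∫ y, f (C x - C y) ∂Q) P := hprodint.integral_prod_left
  have hint2 : Integrable (fun y => ∫ x, f (C x - C y) ∂P) Q := hprodint.integral_prod_right
  have hA : (∫ x, ∫ y, f (C x - C y) ∂Q ∂P) ≤ ∫ x, f (C x - ∫ y, C y ∂Q) ∂P :=
    integral_mono hint1 (hfint P (fun x => C x - ∫ y, C y ∂Q) (hC.sub measurable_const)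
      (fun x => by
        have h1 := abs_le.1 (hM x)
        have h2' := abs_le.1 (habsint Q)
        simp only [Set.mem_Icc]
        constructor <;> linarith [h1.1, h1.2, h2'.1, h2'.2])) jensen1
  have hB : (∫ y, ∫ x, f (C x - C y) ∂P ∂Q) ≤ ∫ y, f ((∫ x, C x ∂P) - C y) ∂Q :=
    integral_mono hint2 (hfint Q (fun y => (∫ x, C x ∂P) - C y) (measurable_const.sub hC)
      (fun y => by
        have h1 := abs_le.1 (hM y)
        have h2' := abs_le.1 (habsint P)
        simp only [Set.mem_Icc]
        constructor <;> linarith [h1.1, h1.2, h2'.1, h2'.2])) jensen2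
  calc 2 * (∫ p : X × X, f (C p.1 - C p.2) ∂(P.prod Q))
      = (∫ x, ∫ y, f (C x - C y) ∂Q ∂P) + (∫ y, ∫ x, f (C x - C y) ∂P ∂Q) := by
        rw [← h1, ← h2]; ring
    _ ≤ _ := add_le_add hA hB

/-- The relativistic paired divergence `D^Rp` is bounded above by the relativistic average
divergence `D^Ra`; moreover the per-critic Jensen inequality holds. -/
theorem DRp_le_DRa
    {X : Type*} [MeasurableSpace X]
    (f : ℝ → ℝ)
    (hf : ∀ x y α : ℝ, 0 ≤ α → α ≤ 1 →
      α * f x + (1 - α) * f y ≤ f (α * x + (1 - α) * y))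
    (hbdd : BddAbove (Set.range f))
    (hf0 : f 0 = 0)
    (P Q : Measure X) [IsProbabilityMeasure P] [IsProbabilityMeasure Q] :
    (⨆ C : {C : X → ℝ // Measurable C ∧ ∃ M : ℝ, ∀ x, |C x| ≤ M},
        2 * ∫ p : X × X, f (C.1 p.1 - C.1 p.2) ∂(P.prod Q))
      ≤ (⨆ C : {C : X → ℝ // Measurable C ∧ ∃ M : ℝ, ∀ x, |C x| ≤ M},
        (∫ x, f (C.1 x - ∫ y, C.1 y ∂Q) ∂P) + (∫ y, f ((∫ x, C.1 x ∂P) - C.1 y) ∂Q))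
    ∧ ∀ C : X → ℝ, Measurable C → (∃ M : ℝ, ∀ x, |C x| ≤ M) →
        2 * (∫ p : X × X, f (C p.1 - C p.2) ∂(P.prod Q))
          ≤ (∫ x, f (C x - ∫ y, C y ∂Q) ∂P) + (∫ y, f ((∫ x, C x ∂P) - C y) ∂Q) := by
  have key : ∀ C : X → ℝ, Measurable C → (∃ M : ℝ, ∀ x, |C x| ≤ M) →
      2 * (∫ p : X × X, f (C p.1 - C p.2) ∂(P.prod Q))
        ≤ (∫ x, f (C x - ∫ y, C y ∂Q) ∂P) + (∫ y, f ((∫ x, C x ∂P) - C y) ∂Q) := by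
    rintro C hC ⟨M, hM⟩
    exact key_ineq f hf P Q C hC M hM
  refine ⟨?_, key⟩
  obtain ⟨B, hB⟩ := hbdd
  have hBle : ∀ t : ℝ, f t ≤ B := fun t => hB ⟨t, rfl⟩
  have hB0 : 0 ≤ B := hf0 ▸ hBle 0
  -- RHS family bounded above by 2B
  have hbdd' : BddAbove (Set.range fun C : {C : X → ℝ // Measurable C ∧ ∃ M : ℝ, ∀ x, |C x| ≤ M} =>
      (∫ x, f (C.1 x - ∫ y, C.1 y ∂Q) ∂P) + (∫ y, f ((∫ x, C.1 x ∂P) - C.1 y) ∂Q)) := by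
    refine ⟨B + B, ?_⟩
    rintro r ⟨C, rfl⟩
    exact add_le_add
      (integral_le_of_le P _ B hB0 (fun x => hBle _))
      (integral_le_of_le Q _ B hB0 (fun y => hBle _))
  refine ciSup_mono hbdd' ?_
  intro C
  exact key C.1 C.2.1 C.2.2
end

section
/- Let k ≥ 1, let x₁, …, x_k be i.i.d. random variables with distribution P, let y₁, …, y_k be i.i.d. random variables with distribution Q, with (x₁, …, x_k, y₁, …, y_k) mutually independent, and let g be a measurable function of a pair such that g(x, y) is square-integrable for x ∼ P and y ∼ Q independent. Let U = (1/k²)·Σ_{i=1}^k Σ_{j=1}^k g(x_i, y_j) and V = (1/k)·Σ_{i=1}^k g(x_i, y_i). Then E[U] = E[V] = E[g(x, y)] for independent x ∼ P, y ∼ Q (both estimators are unbiased), and Var[U] ≤ Var[V]. -/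
/-!
Reindexing the double sum by shifts, `∑ᵢ ∑ⱼ g(xᵢ, yⱼ) = ∑ₛ ∑ᵢ g(xᵢ, y_{i+s})` in the group
`Fin k`, exhibits `U` as the average of `k` paired sums. Each of them is a sum of `k`
independent copies of `g(x, y)`, so it has the same variance as `k V`; and by the
Cauchy–Schwarz inequality `(∑ₛ aₛ)² ≤ k ∑ₛ aₛ²` the variance of an average is at most the
average of the variances.
-/

open MeasureTheory ProbabilityTheory Finset

lemma sum_sum_eq_sum_sum_add {ι M : Type*} [Fintype ι] [AddGroup ι] [AddCommMonoid M]
    (f : ι → ι → M) : ∑ i, ∑ j, f i j = ∑ s, ∑ i, f i (i + s) := by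
  calc ∑ i, ∑ j, f i j = ∑ i, ∑ s, f i (i + s) :=
        sum_congr rfl fun i _ => (Equiv.sum_comp (Equiv.addLeft i) (f i)).symm
    _ = ∑ s, ∑ i, f i (i + s) := sum_comm

namespace ProbabilityTheory

variable {Ω X ι : Type*} [MeasurableSpace Ω] [MeasurableSpace X] {μ : Measure Ω}
  {P Q : Measure X} {x y : ι → Ω → X}

lemma variance_sum_le_card_mul_sum_variance [IsFiniteMeasure μ] {Z : ι → Ω → ℝ} (s : Finset ι)
    (hZ : ∀ i ∈ s, MemLp (Z i) 2 μ) :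
    Var[fun ω => ∑ i ∈ s, Z i ω; μ] ≤ (#s : ℝ) * ∑ i ∈ s, Var[Z i; μ] := by
  have hsum : MemLp (fun ω => ∑ i ∈ s, Z i ω) 2 μ := memLp_finsetSum s hZ
  have hcentered : ∀ i ∈ s, Integrable (fun ω => (Z i ω - μ[Z i]) ^ 2) μ := fun i hi =>
    ((hZ i hi).sub (memLp_const _)).integrable_sq
  rw [variance_eq_integral hsum.aemeasurable,
    integral_finsetSum s fun i hi => (hZ i hi).integrable one_le_two]
  calc ∫ ω, (∑ i ∈ s, Z i ω - ∑ i ∈ s, μ[Z i]) ^ 2 ∂μ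
      = ∫ ω, (∑ i ∈ s, (Z i ω - μ[Z i])) ^ 2 ∂μ := by simp only [sum_sub_distrib]
    _ ≤ ∫ ω, (#s : ℝ) * ∑ i ∈ s, (Z i ω - μ[Z i]) ^ 2 ∂μ := by
        refine integral_mono ?_ ((integrable_finsetSum s hcentered).const_mul _)
          fun ω => sq_sum_le_card_mul_sum_sq
        exact (memLp_finsetSum s fun i hi => (hZ i hi).sub (memLp_const (μ[Z i]))).integrable_sq
    _ = (#s : ℝ) * ∑ i ∈ s, Var[Z i; μ] := by
        rw [integral_const_mul, integral_finsetSum s hcentered]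
        congr 1
        exact sum_congr rfl fun i hi => (variance_eq_integral (hZ i hi).aemeasurable).symm

lemma iIndepFun.measurePreserving_prodMk_sumElim [IsFiniteMeasure μ]
    (hindep : iIndepFun (Sum.elim x y) μ) (hxm : ∀ i, Measurable (x i))
    (hym : ∀ j, Measurable (y j)) (hx_law : ∀ i, μ.map (x i) = P)
    (hy_law : ∀ j, μ.map (y j) = Q) (i j : ι) :
    MeasurePreserving (fun ω => (x i ω, y j ω)) μ (P.prod Q) := by
  refine ⟨(hxm i).prodMk (hym j), ?_⟩
  have hij : IndepFun (x i) (y j) μ := hindep.indepFun (i := .inl i) (j := .inr j) Sum.inl_ne_inr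
  rw [(indepFun_iff_map_prod_eq_prod_map_map (hxm i).aemeasurable (hym j).aemeasurable).mp hij,
    hx_law, hy_law]

lemma iIndepFun.variance_sum_pairs_of_injective [Fintype ι]
    (hindep : iIndepFun (Sum.elim x y) μ) (hxm : ∀ i, Measurable (x i))
    (hym : ∀ j, Measurable (y j))
    (hpair : ∀ i j, MeasurePreserving (fun ω => (x i ω, y j ω)) μ (P.prod Q))
    {g : X × X → ℝ} (hgm : Measurable g) (hg2 : MemLp g 2 (P.prod Q))
    {σ : ι → ι} (hσ : Function.Injective σ) :
    Var[fun ω => ∑ i, g (x i ω, y (σ i) ω); μ] = Fintype.card ι * Var[g; P.prod Q] := by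
  have hmeas : ∀ s, Measurable (Sum.elim x y s) := Sum.rec hxm hym
  have hindep_pairs : (Set.univ : Set ι).Pairwise fun i i' =>
      IndepFun (fun ω => g (x i ω, y (σ i) ω)) (fun ω => g (x i' ω, y (σ i') ω)) μ := by
    intro i _ i' _ hii'
    refine IndepFun.comp (φ := g) (ψ := g) ?_ hgm hgm
    exact hindep.indepFun_prodMk_prodMk hmeas (.inl i) (.inr (σ i)) (.inl i') (.inr (σ i'))
      (by simpa using hii') Sum.inl_ne_inr Sum.inr_ne_inl (by simpa using hσ.ne hii')
  have h := IndepFun.variance_sum (X := fun i ω => g (x i ω, y (σ i) ω)) (s := univ)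
    (fun i _ => hg2.comp_measurePreserving (hpair i (σ i))) (by simpa using hindep_pairs)
  rw [sum_fn] at h
  rw [h, sum_congr rfl fun i _ => (hpair i (σ i)).variance_fun_comp hgm.aemeasurable, sum_const,
    card_univ, nsmul_eq_mul]

end ProbabilityTheory

theorem ustat_unbiased_and_minvar_general
    {X : Type*} [MeasurableSpace X]
    {Ω : Type*} [MeasurableSpace Ω] (μ : Measure Ω) [IsProbabilityMeasure μ]
    (P Q : Measure X)
    (k : ℕ) (hk : 1 ≤ k)
    (x y : Fin k → Ω → X)
    (hxm : ∀ i, Measurable (x i)) (hym : ∀ j, Measurable (y j))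
    (hx_law : ∀ i, μ.map (x i) = P) (hy_law : ∀ j, μ.map (y j) = Q)
    (hindep : iIndepFun (Sum.elim x y) μ)
    (g : X × X → ℝ) (hgm : Measurable g)
    (hg2 : MemLp g 2 (P.prod Q))
    (U V : Ω → ℝ)
    (hU : U = fun ω => (1 / (k : ℝ)^2) * ∑ i : Fin k, ∑ j : Fin k, g (x i ω, y j ω))
    (hV : V = fun ω => (1 / (k : ℝ)) * ∑ i : Fin k, g (x i ω, y i ω)) :
    (∫ ω, U ω ∂μ = ∫ p, g p ∂(P.prod Q))
    ∧ (∫ ω, V ω ∂μ = ∫ p, g p ∂(P.prod Q))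
    ∧ variance U μ ≤ variance V μ := by
  have : NeZero k := ⟨by omega⟩
  have hpair := hindep.measurePreserving_prodMk_sumElim hxm hym hx_law hy_law
  have hmem (i j : Fin k) : MemLp (fun ω => g (x i ω, y j ω)) 2 μ :=
    hg2.comp_measurePreserving (hpair i j)
  have hint (i j : Fin k) : Integrable (fun ω => g (x i ω, y j ω)) μ :=
    (hmem i j).integrable one_le_two
  have hmean (i j : Fin k) : ∫ ω, g (x i ω, y j ω) ∂μ = ∫ p, g p ∂(P.prod Q) := by
    rw [← (hpair i j).map_eq, integral_map (hpair i j).aemeasurable hgm.aestronglyMeasurable]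
  have hvar_paired {σ : Fin k → Fin k} (hσ : Function.Injective σ) :
      Var[fun ω => ∑ i, g (x i ω, y (σ i) ω); μ] = k * Var[g; P.prod Q] := by
    simpa using hindep.variance_sum_pairs_of_injective hxm hym hpair hgm hg2 hσ
  refine ⟨?_, ?_, ?_⟩
  · simp only [hU, integral_const_mul, integral_finsetSum, integrable_finsetSum, hint, hmean,
      implies_true, sum_const, card_univ, Fintype.card_fin, nsmul_eq_mul]
    field_simp
  · simp only [hV, integral_const_mul, integral_finsetSum, hint, hmean, implies_true, sum_const,
      card_univ, Fintype.card_fin, nsmul_eq_mul]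
    field_simp
  · have hU_shift : U = fun ω => 1 / (k : ℝ) ^ 2 * ∑ s, ∑ i, g (x i ω, y (i + s) ω) := by
      rw [hU]
      exact funext fun ω => congrArg _ (sum_sum_eq_sum_sum_add _)
    calc Var[U; μ]
        = (1 / (k : ℝ) ^ 2) ^ 2 * Var[fun ω => ∑ s, ∑ i, g (x i ω, y (i + s) ω); μ] := by
          rw [hU_shift, variance_const_mul]
      _ ≤ (1 / (k : ℝ) ^ 2) ^ 2 * (k * ∑ s, Var[fun ω => ∑ i, g (x i ω, y (i + s) ω); μ]) := by
          gcongr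
          simpa using variance_sum_le_card_mul_sum_variance univ
            fun s _ => memLp_finsetSum univ fun i _ => hmem i (i + s)
      _ = (1 / (k : ℝ)) ^ 2 * (k * Var[g; P.prod Q]) := by
          simp only [hvar_paired (add_left_injective _), sum_const, card_univ, Fintype.card_fin,
            nsmul_eq_mul]
          field_simp
      _ = Var[V; μ] := by
          rw [hV, variance_const_mul]
          exact congrArg _ (hvar_paired Function.injective_id).symm

/-- The U-statistic estimator `U = k⁻² Σᵢ Σⱼ g(xᵢ, yⱼ)` and the paired estimator
`V = k⁻¹ Σᵢ g(xᵢ, yᵢ)` are both unbiased for `E[g(x, y)]` (with `x ∼ P`, `y ∼ Q`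
independent), and `U` has variance at most that of `V`. -/
theorem ustat_unbiased_and_minvar
    {X : Type*} [MeasurableSpace X]
    {Ω : Type*} [MeasurableSpace Ω] (μ : Measure Ω) [IsProbabilityMeasure μ]
    (P Q : Measure X) [IsProbabilityMeasure P] [IsProbabilityMeasure Q]
    (k : ℕ) (hk : 1 ≤ k)
    (x y : Fin k → Ω → X)
    (hxm : ∀ i, Measurable (x i)) (hym : ∀ j, Measurable (y j))
    (hx_law : ∀ i, μ.map (x i) = P) (hy_law : ∀ j, μ.map (y j) = Q)
    (hindep : iIndepFun (Sum.elim x y) μ)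
    (g : X × X → ℝ) (hgm : Measurable g)
    (hg2 : MemLp g 2 (P.prod Q))
    (U V : Ω → ℝ)
    (hU : U = fun ω => (1 / (k : ℝ)^2) * ∑ i : Fin k, ∑ j : Fin k, g (x i ω, y j ω))
    (hV : V = fun ω => (1 / (k : ℝ)) * ∑ i : Fin k, g (x i ω, y i ω)) :
    (∫ ω, U ω ∂μ = ∫ p, g p ∂(P.prod Q))
    ∧ (∫ ω, V ω ∂μ = ∫ p, g p ∂(P.prod Q))
    ∧ variance U μ ≤ variance V μ :=
  ustat_unbiased_and_minvar_general μ P Q k hk x y hxm hym hx_law hy_law hindep g hgm hg2 U V hU hV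
end

section
/- Let f_LS : ℝ → ℝ be defined by f_LS(z) = −(z − 1)² + 1. Let k ≥ 1, let x₁, …, x_k be i.i.d. real-valued random variables with distribution P, and let y₁, …, y_k be i.i.d. real-valued random variables with distribution Q, with all 2k variables mutually independent. Let C : ℝ → ℝ be measurable with C square-integrable under both P and Q, and write μ_y = E[C(y₁)] and σ_y² = Var[C(y₁)]. Then E[ (1/k)·Σ_{i=1}^k f_LS( C(x_i) − (1/k)·Σ_{j=1}^k C(y_j) ) ] = E_{x ∼ P}[ f_LS( C(x) − μ_y ) ] − σ_y²/k. -/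
/-! Put `a = C(xᵢ) - μ_y` and `b = Ȳ - μ_y`, where `Ȳ` is the mini-batch mean of the `C(y_j)`.
The identity `f_LS(a - b) = f_LS(a) + 2 (a - 1) b - b²` splits the expected loss into three terms:
the cross term vanishes because `xᵢ` is independent of the `y_j` and `E b = 0`, and
`E b² = Var Ȳ = σ_y² / k` because the `C(y_j)` are pairwise independent. -/

open MeasureTheory ProbabilityTheory

/-- The least-squares GAN loss. -/
noncomputable def fLS (z : ℝ) : ℝ := -(z - 1)^2 + 1

lemma fLS_eq_two_mul_sub_sq (z : ℝ) : fLS z = 2 * z - z ^ 2 := by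
  unfold fLS; ring

lemma fLS_sub (a b : ℝ) : fLS (a - b) = fLS a + 2 * ((a - 1) * b) - b ^ 2 := by
  unfold fLS; ring

lemma measurable_fLS : Measurable fLS := by
  unfold fLS; fun_prop

section

variable {Ω : Type*} [MeasurableSpace Ω] {μ : Measure Ω}

lemma ProbabilityTheory.identDistrib_comp_of_map_eq {α β : Type*} [MeasurableSpace α]
    [MeasurableSpace β] {X : Ω → α} {P : Measure α} (hX : Measurable X) (hlaw : μ.map X = P)
    {f : α → β} (hf : Measurable f) : IdentDistrib (fun ω => f (X ω)) f μ P :=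
  IdentDistrib.comp ⟨hX.aemeasurable, aemeasurable_id, by rw [hlaw, Measure.map_id']⟩ hf

lemma MeasureTheory.MemLp.integrable_fLS_comp [IsFiniteMeasure μ] {X : Ω → ℝ}
    (hX : MemLp X 2 μ) : Integrable (fun ω => fLS (X ω)) μ := by
  simp_rw [fLS_eq_two_mul_sub_sq]
  exact ((hX.integrable one_le_two).const_mul 2).sub hX.integrable_sq

theorem integral_fLS_sub_of_indepFun [IsProbabilityMeasure μ] {A B : Ω → ℝ}
    (hA : MemLp A 2 μ) (hB : MemLp B 2 μ) (hAB : IndepFun A B μ) :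
    ∫ ω, fLS (A ω - B ω) ∂μ = ∫ ω, fLS (A ω - μ[B]) ∂μ - Var[B; μ] := by
  set m := μ[B]
  have hA' : MemLp (fun ω => A ω - m) 2 μ := hA.sub (memLp_const m)
  have hB' : MemLp (fun ω => B ω - m) 2 μ := hB.sub (memLp_const m)
  have hindep : IndepFun (fun ω => A ω - m - 1) (fun ω => B ω - m) μ :=
    hAB.comp ((measurable_id.sub_const m).sub_const 1) (measurable_id.sub_const m)
  have hcross : ∫ ω, (A ω - m - 1) * (B ω - m) ∂μ = 0 := by
    rw [hindep.integral_fun_mul_eq_mul_integral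
        (hA'.aestronglyMeasurable.sub aestronglyMeasurable_const) hB'.aestronglyMeasurable,
      integral_sub (hB.integrable one_le_two) (integrable_const m)]
    simp [m]
  have hcross_int : Integrable (fun ω => (A ω - m - 1) * (B ω - m)) μ :=
    hindep.integrable_mul ((hA'.integrable one_le_two).sub (integrable_const 1))
      (hB'.integrable one_le_two)
  have hloss_int : Integrable (fun ω => fLS (A ω - m) + 2 * ((A ω - m - 1) * (B ω - m))) μ :=
    hA'.integrable_fLS_comp.add (hcross_int.const_mul 2)
  calc ∫ ω, fLS (A ω - B ω) ∂μ
      = ∫ ω, fLS (A ω - m) + 2 * ((A ω - m - 1) * (B ω - m)) - (B ω - m) ^ 2 ∂μ := by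
        congr 1 with ω
        rw [← fLS_sub, sub_sub_sub_cancel_right]
    _ = ∫ ω, fLS (A ω - m) ∂μ + 2 * ∫ ω, (A ω - m - 1) * (B ω - m) ∂μ
          - ∫ ω, (B ω - m) ^ 2 ∂μ := by
        rw [integral_sub hloss_int hB'.integrable_sq,
          integral_add hA'.integrable_fLS_comp (hcross_int.const_mul 2), integral_const_mul]
    _ = ∫ ω, fLS (A ω - m) ∂μ - Var[B; μ] := by
        rw [hcross, variance_eq_integral hB.aemeasurable, mul_zero, add_zero]

theorem variance_sampleMean {ι : Type*} [Fintype ι] [IsProbabilityMeasure μ]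
    {Y : ι → Ω → ℝ} {v : ℝ} (hY : ∀ j, MemLp (Y j) 2 μ)
    (hindep : Pairwise fun i j => IndepFun (Y i) (Y j) μ) (hvar : ∀ j, Var[Y j; μ] = v) :
    Var[fun ω => (1 / (Fintype.card ι : ℝ)) * ∑ j, Y j ω; μ] = v / Fintype.card ι := by
  have hsum : Var[∑ j, Y j; μ] = Fintype.card ι * v := by
    rw [IndepFun.variance_sum (fun j _ => hY j) (fun i _ j _ hij => hindep hij)]
    simp [hvar]
  simp_rw [variance_const_mul, ← Finset.sum_apply]
  rw [hsum]
  rcases eq_or_ne (Fintype.card ι : ℝ) 0 with h | h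
  · simp [h]
  · field_simp

theorem integral_sampleMean {ι : Type*} [Fintype ι] [Nonempty ι]
    {Y : ι → Ω → ℝ} {m : ℝ} (hY : ∀ j, Integrable (Y j) μ) (hmean : ∀ j, μ[Y j] = m) :
    ∫ ω, (1 / (Fintype.card ι : ℝ)) * ∑ j, Y j ω ∂μ = m := by
  rw [integral_const_mul, integral_finsetSum _ fun j _ => hY j]
  simp [hmean]

theorem ProbabilityTheory.iIndepFun.indepFun_left_sum_right {ι κ : Type*} [Fintype κ]
    {X : ι → Ω → ℝ} {Y : κ → Ω → ℝ} (h : iIndepFun (Sum.elim X Y) μ)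
    (hX : ∀ i, Measurable (X i)) (hY : ∀ j, Measurable (Y j)) (i : ι) :
    IndepFun (X i) (fun ω => ∑ j, Y j ω) μ := by
  have hmeas : ∀ a, Measurable (Sum.elim X Y a) := by
    rintro (i | j)
    exacts [hX i, hY j]
  have hsum : (fun ω => ∑ j, Y j ω) = ∑ a ∈ Finset.univ.map .inr, Sum.elim X Y a := by
    ext ω
    simp [Finset.sum_apply]
  rw [hsum]
  exact (h.indepFun_finsetSum_of_notMem hmeas (i := .inl i) (by simp)).symm

end

/-- The mini-batch RaLSGAN estimator of the first term has expectation equal to the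
population term minus `σ_y² / k` (finite-sample bias `-σ_y²/k`). -/
theorem raLSGAN_first_term_bias
    {Ω : Type*} [MeasurableSpace Ω] (μ : Measure Ω) [IsProbabilityMeasure μ]
    (P Q : Measure ℝ) [IsProbabilityMeasure P] [IsProbabilityMeasure Q]
    (k : ℕ) (hk : 1 ≤ k)
    (x y : Fin k → Ω → ℝ)
    (hxm : ∀ i, Measurable (x i)) (hym : ∀ j, Measurable (y j))
    (hx_law : ∀ i, μ.map (x i) = P) (hy_law : ∀ j, μ.map (y j) = Q)
    (hindep : iIndepFun (Sum.elim x y) μ)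
    (C : ℝ → ℝ) (hCm : Measurable C)
    (hC2P : MemLp C 2 P) (hC2Q : MemLp C 2 Q)
    (μy σy2 : ℝ)
    (hμy : μy = ∫ z, C z ∂Q)
    (hσy2 : σy2 = ∫ z, (C z - μy)^2 ∂Q) :
    ∫ ω, (1 / (k : ℝ)) * ∑ i : Fin k,
        fLS (C (x i ω) - (1 / (k : ℝ)) * ∑ j : Fin k, C (y j ω)) ∂μ
      = (∫ z, fLS (C z - μy) ∂P) - σy2 / k := by
  have : Nonempty (Fin k) := ⟨⟨0, hk⟩⟩
  have hX i : IdentDistrib (fun ω => C (x i ω)) C μ P :=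
    identDistrib_comp_of_map_eq (hxm i) (hx_law i) hCm
  have hY j : IdentDistrib (fun ω => C (y j ω)) C μ Q :=
    identDistrib_comp_of_map_eq (hym j) (hy_law j) hCm
  have hCindep : iIndepFun (Sum.elim (fun i ω => C (x i ω)) (fun j ω => C (y j ω))) μ := by
    convert hindep.comp (fun _ => C) (fun _ => hCm) using 1
    ext (i | j) ω <;> rfl
  have hY2 j : MemLp (fun ω => C (y j ω)) 2 μ := (hY j).memLp_iff.2 hC2Q
  have hmean : ∫ ω, (1 / (k : ℝ)) * ∑ j, C (y j ω) ∂μ = μy := by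
    simpa using integral_sampleMean (fun j => (hY2 j).integrable one_le_two)
      fun j => (hY j).integral_eq.trans hμy.symm
  have hvar : Var[fun ω => (1 / (k : ℝ)) * ∑ j, C (y j ω); μ] = σy2 / k := by
    simpa using variance_sampleMean hY2
      (fun i j hij => hCindep.indepFun (Sum.inr_injective.ne hij))
      fun j => by rw [(hY j).variance_eq, variance_eq_integral hCm.aemeasurable, ← hμy, hσy2]
  have hYbar2 : MemLp (fun ω => (1 / (k : ℝ)) * ∑ j, C (y j ω)) 2 μ :=
    (memLp_finsetSum Finset.univ fun j _ => hY2 j).const_mul _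
  have hterm i : ∫ ω, fLS (C (x i ω) - (1 / (k : ℝ)) * ∑ j, C (y j ω)) ∂μ
      = ∫ z, fLS (C z - μy) ∂P - σy2 / k := by
    rw [integral_fLS_sub_of_indepFun ((hX i).memLp_iff.2 hC2P) hYbar2
      ((hCindep.indepFun_left_sum_right (fun i => hCm.comp (hxm i))
        (fun j => hCm.comp (hym j)) i).comp measurable_id (measurable_const_mul _)), hmean, hvar]
    congr 1
    exact ((hX i).comp (measurable_fLS.comp (measurable_id.sub_const μy))).integral_eq
  have hterm_int i :
      Integrable (fun ω => fLS (C (x i ω) - (1 / (k : ℝ)) * ∑ j, C (y j ω))) μ :=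
    (((hX i).memLp_iff.2 hC2P).sub hYbar2).integrable_fLS_comp
  rw [integral_const_mul, integral_finsetSum _ fun i _ => hterm_int i]
  simp only [hterm, Finset.sum_const, Finset.card_univ, Fintype.card_fin, nsmul_eq_mul]
  field_simp
end

section
/- Let f_LS : ℝ → ℝ be defined by f_LS(z) = −(z − 1)² + 1. Let k ≥ 1, let x₁, …, x_k be i.i.d. real-valued random variables with distribution P, and let y₁, …, y_k be i.i.d. real-valued random variables with distribution Q, with all 2k variables mutually independent. Let C : ℝ → ℝ be measurable with C square-integrable under both P and Q, and write μ_x = E[C(x₁)], μ_y = E[C(y₁)], σ_x² = Var[C(x₁)], σ_y² = Var[C(y₁)], and let m̂ = (1/(2k))·Σ_{j=1}^k (C(x_j) + C(y_j)) be the mini-batch mixture mean. Then E[ (1/k)·Σ_{i=1}^k f_LS( C(x_i) − m̂ ) + (1/k)·Σ_{i=1}^k f_LS( m̂ − C(y_i) ) ] = E_{x ∼ P}[ f_LS( C(x) − (μ_x + μ_y)/2 ) ] + E_{y ∼ Q}[ f_LS( (μ_x + μ_y)/2 − C(y) ) ] + (σ_x² + σ_y²)/(2k). -/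
/-!
Since `fLS` is a quadratic with leading coefficient `-1`, moving the centring point of the
estimator from the batch mixture mean `m̂` to the population mixture mean `c = (μx + μy) / 2`
changes it by exactly `2 (m̂ - c)²`: the quadratic terms contribute `-2 (m̂ - c)²` and the cross
terms `4 (m̂ - c)²`, because `m̂` is the mean of all `2k` points. The recentred estimator is an
average of terms with laws `P` and `Q`, so its expectation is the population objective, while
`E[m̂] = c` and independence give `E[2 (m̂ - c)²] = 2 Var m̂ = (σx² + σy²) / (2k)`.
-/

open MeasureTheory ProbabilityTheory

open Finset

theorem average_fLS_batchMean_eq {ι : Type*} [Fintype ι] [Nonempty ι] (a b : ι → ℝ) (c m : ℝ)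
    (hm : m = 1 / (2 * (Fintype.card ι : ℝ)) * ∑ j, (a j + b j)) :
    1 / (Fintype.card ι : ℝ) * ∑ i, fLS (a i - m) + 1 / (Fintype.card ι : ℝ) * ∑ i, fLS (m - b i)
      = 1 / (Fintype.card ι : ℝ) * ∑ i, fLS (a i - c)
        + 1 / (Fintype.card ι : ℝ) * ∑ i, fLS (c - b i) + 2 * (m - c) ^ 2 := by
  set n : ℝ := (Fintype.card ι : ℝ)
  have hn : n ≠ 0 := by positivity
  have hsum : ∑ j, (a j + b j) = 2 * n * m := by rw [hm]; field_simp
  have hterm (i : ι) : fLS (a i - m) + fLS (m - b i)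
      = fLS (a i - c) + fLS (c - b i) + (2 * (m - c) * (a i + b i) - 2 * (m - c) * (m + c)) := by
    simp only [fLS]; ring
  rw [← mul_add, ← sum_add_distrib, sum_congr rfl fun i _ => hterm i, sum_add_distrib,
    sum_add_distrib, sum_sub_distrib, ← mul_sum, hsum, sum_const, card_univ, nsmul_eq_mul]
  field_simp
  ring

lemma MeasureTheory.MemLp.integrable_fLS {α : Type*} [MeasurableSpace α] {ν : Measure α}
    [IsFiniteMeasure ν] {f : α → ℝ} (hf : MemLp f 2 ν) : Integrable (fun z => fLS (f z)) ν :=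
  (hf.sub (memLp_const 1)).integrable_sq.neg.add (integrable_const 1)

namespace ProbabilityTheory.HasLaw

variable {Ω 𝓧 : Type*} [MeasurableSpace Ω] [MeasurableSpace 𝓧] {μ : Measure Ω} {P : Measure 𝓧}
  {X : Ω → 𝓧} {f : 𝓧 → ℝ}

lemma memLp_comp (hX : HasLaw X P μ) {p : ENNReal} (hf : MemLp f p P) : MemLp (f ∘ X) p μ := by
  rw [← hX.map_eq] at hf
  exact (memLp_map_measure_iff hf.aestronglyMeasurable hX.aemeasurable).1 hf

lemma integrable_comp (hX : HasLaw X P μ) (hf : Integrable f P) :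
    Integrable (fun ω => f (X ω)) μ :=
  (hX.map_eq ▸ hf).comp_aemeasurable hX.aemeasurable

lemma variance_comp (hX : HasLaw X P μ) (hf : AEMeasurable f P) : Var[f ∘ X; μ] = Var[f; P] := by
  rw [← hX.map_eq, variance_map (hX.map_eq ▸ hf) hX.aemeasurable]

lemma integral_average_comp {ι : Type*} [Fintype ι] [Nonempty ι] {X : ι → Ω → 𝓧}
    (hX : ∀ i, HasLaw (X i) P μ) (hf : Integrable f P) :
    ∫ ω, 1 / (Fintype.card ι : ℝ) * ∑ i, f (X i ω) ∂μ = ∫ z, f z ∂P := by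
  have hint (i : ι) : ∫ ω, f (X i ω) ∂μ = ∫ z, f z ∂P :=
    (hX i).integral_comp hf.aestronglyMeasurable
  rw [integral_const_mul, integral_finsetSum _ fun i _ => (hX i).integrable_comp hf]
  simp [hint]

end ProbabilityTheory.HasLaw

section TwoSample

variable {Ω ι : Type*} [MeasurableSpace Ω] {μ : Measure Ω} [Fintype ι] {P Q : Measure ℝ}
  {x y : ι → Ω → ℝ} {C : ℝ → ℝ}

lemma memLp_sum_comp_add (hx : ∀ i, HasLaw (x i) P μ) (hy : ∀ i, HasLaw (y i) Q μ)
    (hCP : MemLp C 2 P) (hCQ : MemLp C 2 Q) :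
    MemLp (fun ω => ∑ j, (C (x j ω) + C (y j ω))) 2 μ :=
  memLp_finsetSum _ fun i _ => ((hx i).memLp_comp hCP).add ((hy i).memLp_comp hCQ)

lemma variance_sum_comp_add (hx : ∀ i, HasLaw (x i) P μ) (hy : ∀ i, HasLaw (y i) Q μ)
    (hindep : iIndepFun (Sum.elim x y) μ) (hCm : Measurable C) (hCP : MemLp C 2 P)
    (hCQ : MemLp C 2 Q) :
    Var[fun ω => ∑ j, (C (x j ω) + C (y j ω)); μ] = Fintype.card ι * (Var[C; P] + Var[C; Q]) := by
  set A : ι ⊕ ι → Ω → ℝ := fun s => C ∘ Sum.elim x y s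
  have hA : iIndepFun A μ := hindep.comp _ fun _ => hCm
  have hA2 : ∀ s, MemLp (A s) 2 μ := by
    rintro (i | i)
    exacts [(hx i).memLp_comp hCP, (hy i).memLp_comp hCQ]
  have hsum : (fun ω => ∑ j, (C (x j ω) + C (y j ω))) = ∑ s, A s := by
    ext ω; simp [A, Fintype.sum_sum_type, sum_add_distrib]
  rw [hsum, IndepFun.variance_sum (fun s _ => hA2 s) fun s _ t _ hst => hA.indepFun hst,
    Fintype.sum_sum_type]
  simp [A, (hx _).variance_comp hCm.aemeasurable, (hy _).variance_comp hCm.aemeasurable]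
  ring

lemma integral_sq_batchMean_sub_mean [IsFiniteMeasure P] [IsFiniteMeasure Q] [Nonempty ι]
    (hx : ∀ i, HasLaw (x i) P μ) (hy : ∀ i, HasLaw (y i) Q μ)
    (hindep : iIndepFun (Sum.elim x y) μ) (hCm : Measurable C) (hCP : MemLp C 2 P)
    (hCQ : MemLp C 2 Q) :
    ∫ ω, (1 / (2 * (Fintype.card ι : ℝ)) * ∑ j, (C (x j ω) + C (y j ω))
        - (∫ z, C z ∂P + ∫ z, C z ∂Q) / 2) ^ 2 ∂μ
      = (Var[C; P] + Var[C; Q]) / (4 * Fintype.card ι) := by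
  have hCx (i : ι) : Integrable (fun ω => C (x i ω)) μ :=
    (hx i).integrable_comp (hCP.integrable one_le_two)
  have hCy (i : ι) : Integrable (fun ω => C (y i ω)) μ :=
    (hy i).integrable_comp (hCQ.integrable one_le_two)
  have hEx (i : ι) : ∫ ω, C (x i ω) ∂μ = ∫ z, C z ∂P :=
    (hx i).integral_comp hCm.aestronglyMeasurable
  have hEy (i : ι) : ∫ ω, C (y i ω) ∂μ = ∫ z, C z ∂Q :=
    (hy i).integral_comp hCm.aestronglyMeasurable
  have hmean : (∫ z, C z ∂P + ∫ z, C z ∂Q) / 2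
      = ∫ ω, 1 / (2 * (Fintype.card ι : ℝ)) * ∑ j, (C (x j ω) + C (y j ω)) ∂μ := by
    rw [integral_const_mul, integral_finsetSum _ fun i _ => (hCx i).fun_add (hCy i)]
    simp only [integral_add (hCx _) (hCy _), hEx, hEy, sum_const, card_univ, nsmul_eq_mul]
    field_simp
  rw [hmean, ← variance_eq_integral ((memLp_sum_comp_add hx hy hCP hCQ).const_mul _).aemeasurable,
    variance_const_mul, variance_sum_comp_add hx hy hindep hCm hCP hCQ]
  field_simp
  ring

end TwoSample

/-- The mini-batch RcLSGAN estimator (centered at the mini-batch mixture mean `m̂`) has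
expectation equal to the population objective plus `(σ_x² + σ_y²)/(2k)`. -/
theorem rcLSGAN_bias
    {Ω : Type*} [MeasurableSpace Ω] (μ : Measure Ω) [IsProbabilityMeasure μ]
    (P Q : Measure ℝ) [IsProbabilityMeasure P] [IsProbabilityMeasure Q]
    (k : ℕ) (hk : 1 ≤ k)
    (x y : Fin k → Ω → ℝ)
    (hxm : ∀ i, Measurable (x i)) (hym : ∀ j, Measurable (y j))
    (hx_law : ∀ i, μ.map (x i) = P) (hy_law : ∀ j, μ.map (y j) = Q)
    (hindep : iIndepFun (Sum.elim x y) μ)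
    (C : ℝ → ℝ) (hCm : Measurable C)
    (hC2P : MemLp C 2 P) (hC2Q : MemLp C 2 Q)
    (μx μy σx2 σy2 : ℝ)
    (hμx : μx = ∫ z, C z ∂P) (hμy : μy = ∫ z, C z ∂Q)
    (hσx2 : σx2 = ∫ z, (C z - μx)^2 ∂P) (hσy2 : σy2 = ∫ z, (C z - μy)^2 ∂Q)
    (mhat : Ω → ℝ)
    (hmhat : mhat = fun ω => (1 / (2 * (k : ℝ))) * ∑ j : Fin k, (C (x j ω) + C (y j ω))) :
    ∫ ω, ((1 / (k : ℝ)) * ∑ i : Fin k, fLS (C (x i ω) - mhat ω)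
          + (1 / (k : ℝ)) * ∑ i : Fin k, fLS (mhat ω - C (y i ω))) ∂μ
      = (∫ z, fLS (C z - (μx + μy) / 2) ∂P)
        + (∫ z, fLS ((μx + μy) / 2 - C z) ∂Q)
        + (σx2 + σy2) / (2 * k) := by
  subst hmhat hσx2 hσy2 hμx hμy
  have : Nonempty (Fin k) := ⟨⟨0, hk⟩⟩
  have hx (i : Fin k) : HasLaw (x i) P μ := ⟨(hxm i).aemeasurable, hx_law i⟩
  have hy (i : Fin k) : HasLaw (y i) Q μ := ⟨(hym i).aemeasurable, hy_law i⟩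
  set c := (∫ z, C z ∂P + ∫ z, C z ∂Q) / 2
  have hfP : Integrable (fun z => fLS (C z - c)) P := (hC2P.sub (memLp_const c)).integrable_fLS
  have hfQ : Integrable (fun z => fLS (c - C z)) Q := ((memLp_const c).sub hC2Q).integrable_fLS
  rw [show (k : ℝ) = Fintype.card (Fin k) by simp]
  set n : ℝ := (Fintype.card (Fin k) : ℝ)
  have hIx : Integrable (fun ω => 1 / n * ∑ i, fLS (C (x i ω) - c)) μ :=
    (integrable_finsetSum _ fun i _ => (hx i).integrable_comp hfP).const_mul _
  have hIy : Integrable (fun ω => 1 / n * ∑ i, fLS (c - C (y i ω))) μ :=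
    (integrable_finsetSum _ fun i _ => (hy i).integrable_comp hfQ).const_mul _
  have hIm : Integrable (fun ω => 2 * (1 / (2 * n) * ∑ j, (C (x j ω) + C (y j ω)) - c) ^ 2) μ :=
    (((memLp_sum_comp_add hx hy hC2P hC2Q).const_mul _).sub (memLp_const c)).integrable_sq
      |>.const_mul 2
  rw [integral_congr_ae (ae_of_all _ fun ω =>
      average_fLS_batchMean_eq (fun i => C (x i ω)) (fun i => C (y i ω)) c _ rfl),
    integral_add (hIx.fun_add hIy) hIm, integral_add hIx hIy, integral_const_mul 2,
    HasLaw.integral_average_comp hx hfP, HasLaw.integral_average_comp hy hfQ,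
    integral_sq_batchMean_sub_mean hx hy hindep hCm hC2P hC2Q,
    variance_eq_integral hCm.aemeasurable, variance_eq_integral hCm.aemeasurable]
  ring
end
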